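/- arXiv:2304.01699 — 6 statements merged into one kernel-verified Lean document; each statement's English description precedes it below -/
import Mathlib

section
/- Call a subset A ⊆ Φ⁺ saturated if (i) for all α, β ∈ A with α+β ∈ Φ one has α+β ∈ A, and (ii) for all γ, δ ∈ Φ⁺ \ A with γ+δ ∈ Φ one has γ+δ ∉ A. For a weight μ = μ(A) of the spin module of the Cartan subalgebra, the following are equivalent: (1) mult(μ) = 1, i.e., A is the unique subset of Φ⁺ with μ(A) = μ; (2) A is saturated; (3) there exists w in the Weyl group W with μ = w(ρ). -/
open Finset

/-- A finite set `Φ` in a real inner product space is (the set of roots of) a reduced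
crystallographic root system. -/
def IsRootSystem {V : Type*} [NormedAddCommGroup V] [InnerProductSpace ℝ V]
    (Φ : Finset V) : Prop :=
  (0 : V) ∉ Φ ∧
  Submodule.span ℝ (Φ : Set V) = ⊤ ∧
  (∀ α ∈ Φ, ∀ β ∈ Φ, β - ((2 * inner ℝ β α / inner ℝ α α : ℝ)) • α ∈ Φ) ∧
  (∀ α ∈ Φ, ∀ β ∈ Φ, ∃ n : ℤ, (2 * inner ℝ β α / inner ℝ α α : ℝ) = (n : ℝ)) ∧
  (∀ α ∈ Φ, ∀ t : ℝ, t • α ∈ Φ → t = 1 ∨ t = -1)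

/-- `Φpos` is a positive system in the root system `Φ`. -/
def IsPositiveSystem {V : Type*} [NormedAddCommGroup V] [InnerProductSpace ℝ V]
    (Φ Φpos : Finset V) : Prop :=
  Φpos ⊆ Φ ∧
  (∀ α ∈ Φ, α ∈ Φpos ∨ -α ∈ Φpos) ∧
  (∀ α ∈ Φpos, -α ∉ Φpos) ∧
  (∀ α ∈ Φpos, ∀ β ∈ Φpos, α + β ∈ Φ → α + β ∈ Φpos)

/-- The weight `μ(A) = ½(∑_{α ∈ Φ⁺ \ A} α − ∑_{α ∈ A} α)` of the spin module. -/
noncomputable def spinWeight {V : Type*} [NormedAddCommGroup V] [InnerProductSpace ℝ V]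
    [DecidableEq V] (Φpos A : Finset V) : V :=
  (2⁻¹ : ℝ) • (∑ α ∈ Φpos \ A, α - ∑ α ∈ A, α)

/-- A subset `A ⊆ Φ⁺` is saturated. -/
def Saturated {V : Type*} [NormedAddCommGroup V] [InnerProductSpace ℝ V]
    (Φ Φpos A : Finset V) : Prop :=
  (∀ α ∈ A, ∀ β ∈ A, α + β ∈ Φ → α + β ∈ A) ∧
  (∀ γ ∈ Φpos, ∀ δ ∈ Φpos, γ ∉ A → δ ∉ A → γ + δ ∈ Φ → γ + δ ∉ A)

/-- The Weyl group of `Φ`: the subgroup of linear automorphisms of `V` generated by the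
reflections in the roots. -/
def WeylGroup {V : Type*} [NormedAddCommGroup V] [InnerProductSpace ℝ V]
    (Φ : Finset V) : Subgroup (V ≃ₗ[ℝ] V) :=
  Subgroup.closure
    {w : V ≃ₗ[ℝ] V | ∃ α ∈ Φ, ∀ x, w x = x - ((2 * inner ℝ x α / inner ℝ α α : ℝ)) • α}

section SpinAux

variable {V : Type*} [NormedAddCommGroup V] [InnerProductSpace ℝ V]

local notation "⟪" x ", " y "⟫" => @inner ℝ _ _ x y

private lemma ipos {α : V} (h : α ≠ 0) : (0:ℝ) < ⟪α, α⟫ := by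
  rcases lt_or_eq_of_le (real_inner_self_nonneg (x := α)) with h' | h'
  · exact h'
  · exact absurd (real_inner_self_nonpos.mp h'.ge) h

/-- The reflection in `α` as a linear map. -/
noncomputable def srefL (α : V) : V →ₗ[ℝ] V where
  toFun x := x - ((2 * ⟪x, α⟫ / ⟪α, α⟫ : ℝ)) • α
  map_add' x y := by
    rw [inner_add_left, mul_add, add_div, add_smul]
    abel
  map_smul' c x := by
    rw [real_inner_smul_left, RingHom.id_apply, smul_sub, smul_smul]
    congr 1
    ring

lemma srefL_apply (α x : V) : srefL α x = x - ((2 * ⟪x, α⟫ / ⟪α, α⟫ : ℝ)) • α := rfl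

lemma inner_srefL {α : V} (hα : α ≠ 0) (x y : V) : ⟪srefL α x, srefL α y⟫ = ⟪x, y⟫ := by
  have ha := (ipos hα).ne'
  simp only [srefL_apply, inner_sub_left, inner_sub_right, real_inner_smul_left,
    real_inner_smul_right]
  rw [real_inner_comm α y]
  field_simp
  ring

lemma inner_srefL_left {α : V} (x : V) : ⟪srefL α x, α⟫ = -⟪x, α⟫ := by
  by_cases hα : α = 0
  · simp [srefL_apply, hα]
  · have ha := (ipos hα).ne'
    rw [srefL_apply, inner_sub_left, real_inner_smul_left]
    field_simp
    ring

lemma srefL_srefL (α x : V) : srefL α (srefL α x) = x := by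
  by_cases hα : α = 0
  · simp [srefL_apply, hα]
  · have ha := (ipos hα).ne'
    rw [srefL_apply (x := srefL α x), inner_srefL_left]
    rw [srefL_apply]
    have : (2 * -⟪x, α⟫ / ⟪α, α⟫ : ℝ) = -(2 * ⟪x, α⟫ / ⟪α, α⟫ : ℝ) := by ring
    rw [this, neg_smul]
    abel

lemma srefL_self {α : V} (hα : α ≠ 0) : srefL α α = -α := by
  have ha := (ipos hα).ne'
  rw [srefL_apply]
  have : (2 * ⟪α, α⟫ / ⟪α, α⟫ : ℝ) = 2 := by field_simp
  rw [this, two_smul]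
  abel

lemma srefL_inj {α : V} : Function.Injective (srefL α) := by
  intro x y h
  have := congrArg (srefL α) h
  rwa [srefL_srefL, srefL_srefL] at this

end SpinAux

section SpinAux2

variable {V : Type*} [NormedAddCommGroup V] [InnerProductSpace ℝ V]

local notation "⟪" x ", " y "⟫" => @inner ℝ _ _ x y

/-- The reflection in `α` as a linear equivalence. -/
noncomputable def srefE (α : V) : V ≃ₗ[ℝ] V :=
  LinearEquiv.ofLinear (srefL α) (srefL α)
    (by ext x; simp [srefL_srefL]) (by ext x; simp [srefL_srefL])

lemma srefE_apply (α x : V) : srefE α x = srefL α x := rfl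

lemma srefE_mem_weyl {Φ : Finset V} {α : V} (hα : α ∈ Φ) : srefE α ∈ WeylGroup Φ :=
  Subgroup.subset_closure ⟨α, hα, fun _ => rfl⟩

lemma root_nonzero {Φ : Finset V} (hΦ : IsRootSystem Φ) {α : V} (hα : α ∈ Φ) : α ≠ 0 :=
  fun e => hΦ.1 (e ▸ hα)

lemma sref_root_mem {Φ : Finset V} (hΦ : IsRootSystem Φ) {α β : V} (hα : α ∈ Φ) (hβ : β ∈ Φ) :
    srefL α β ∈ Φ :=
  hΦ.2.2.1 α hα β hβ

lemma root_neg_mem {Φ : Finset V} (hΦ : IsRootSystem Φ) {α : V} (hα : α ∈ Φ) : -α ∈ Φ := by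
  have := sref_root_mem hΦ hα hα
  rwa [srefL_self (root_nonzero hΦ hα)] at this

lemma root_sum_mem {Φ : Finset V} (hΦ : IsRootSystem Φ) {α β : V} (hα : α ∈ Φ) (hβ : β ∈ Φ)
    (hneg : ⟪β, α⟫ < 0) (hne : β ≠ -α) : α + β ∈ Φ := by
  obtain ⟨h0, -, hrefl, hint, hred⟩ := hΦ
  have hα0 : α ≠ 0 := fun e => h0 (e ▸ hα)
  have hβ0 : β ≠ 0 := fun e => h0 (e ▸ hβ)
  have haa := ipos hα0
  have hbb := ipos hβ0
  have hna : ‖α‖ ≠ 0 := norm_ne_zero_iff.mpr hα0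
  obtain ⟨m, hm⟩ := hint α hα β hβ
  obtain ⟨n, hn⟩ := hint β hβ α hα
  have hneg' : ⟪α, β⟫ < 0 := by rwa [real_inner_comm]
  have hm0 : (m:ℝ) < 0 := hm ▸ div_neg_of_neg_of_pos (by linarith) haa
  have hn0 : (n:ℝ) < 0 := hn ▸ div_neg_of_neg_of_pos (by linarith) hbb
  -- strict Cauchy–Schwarz since β is not proportional to α
  have h1 : ⟪-β, α⟫ < ‖-β‖ * ‖α‖ := by
    rw [inner_lt_norm_mul_iff_real]
    intro hcon
    have hβt : β = (-(‖β‖ / ‖α‖)) • α := by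
      have h2 : (-‖α‖) • β = ‖β‖ • α := by
        rw [norm_neg] at hcon
        rw [neg_smul, ← smul_neg, hcon]
      have h3 : β = (-‖α‖)⁻¹ • (‖β‖ • α) := by
        rw [← h2, smul_smul, inv_mul_cancel₀ (neg_ne_zero.mpr hna), one_smul]
      have h4 : (-‖α‖)⁻¹ * ‖β‖ = -(‖β‖ / ‖α‖) := by
        field_simp
      rw [smul_smul, h4] at h3
      exact h3
    rcases hred α hα _ (hβt ▸ hβ) with h | h
    · have hq : (0:ℝ) ≤ ‖β‖ / ‖α‖ := by positivity
      linarith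
    · apply hne
      rw [hβt, h, neg_one_smul]
  have h1' : -⟪β, α⟫ < ‖β‖ * ‖α‖ := by rwa [inner_neg_left, norm_neg] at h1
  have hCS : ⟪β, α⟫ * ⟪β, α⟫ < ⟪α, α⟫ * ⟪β, β⟫ := by
    have key : ⟪β, α⟫ * ⟪β, α⟫ < (‖β‖ * ‖α‖) * (‖β‖ * ‖α‖) := by
      have hpos : 0 ≤ -⟪β, α⟫ := by linarith
      calc ⟪β, α⟫ * ⟪β, α⟫ = (-⟪β, α⟫) * (-⟪β, α⟫) := by ring
        _ < (‖β‖ * ‖α‖) * (‖β‖ * ‖α‖) := mul_self_lt_mul_self hpos h1'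
    have e2 : ⟪α, α⟫ * ⟪β, β⟫ = (‖β‖ * ‖α‖) * (‖β‖ * ‖α‖) := by
      rw [real_inner_self_eq_norm_mul_norm, real_inner_self_eq_norm_mul_norm]; ring
    linarith
  have hmn : (m:ℝ) * (n:ℝ) < 4 := by
    rw [← hm, ← hn, div_mul_div_comm, div_lt_iff₀ (by positivity)]
    rw [real_inner_comm β α]
    nlinarith [hCS]
  have hmnZ : m * n < 4 := by exact_mod_cast (by push_cast; exact hmn : ((m*n : ℤ):ℝ) < 4)
  have hmZ : m ≤ -1 := by have : m < 0 := by exact_mod_cast hm0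
                          omega
  have hnZ : n ≤ -1 := by have : n < 0 := by exact_mod_cast hn0
                          omega
  have hcase : m = -1 ∨ n = -1 := by
    by_contra hcon
    push_neg at hcon
    have hm2 : m ≤ -2 := by omega
    have hn2 : n ≤ -2 := by omega
    nlinarith [hmnZ]
  rcases hcase with h | h
  · have := hrefl α hα β hβ
    rw [hm, h] at this
    push_cast at this
    rw [neg_one_smul, sub_neg_eq_add] at this
    rwa [add_comm]
  · have := hrefl β hβ α hα
    rw [hn, h] at this
    push_cast at this
    rwa [neg_one_smul, sub_neg_eq_add] at this

end SpinAux2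

section SpinAux3

variable {V : Type*} [NormedAddCommGroup V] [InnerProductSpace ℝ V]

local notation "⟪" x ", " y "⟫" => @inner ℝ _ _ x y

lemma flip_aux {Φ Φpos : Finset V} (hΦ : IsRootSystem Φ) (hpos : IsPositiveSystem Φ Φpos)
    {α : V} (hα : α ∈ Φpos) :
    ∀ k : ℕ, ∀ β ∈ Φpos, srefL α β ∉ Φpos →
      (2 * ⟪β, α⟫ / ⟪α, α⟫ : ℝ) = -(k : ℝ) → False := by
  obtain ⟨hsub, htot, hasym, hclos⟩ := hpos
  have hαΦ : α ∈ Φ := hsub hα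
  have hα0 : α ≠ 0 := root_nonzero hΦ hαΦ
  have haa := ipos hα0
  intro k
  induction k using Nat.strong_induction_on with
  | _ k ih =>
    intro β hβ hflip hm
    have hβΦ : β ∈ Φ := hsub hβ
    rcases k with _ | _ | k
    · -- k = 0
      apply hflip
      have hba : ⟪β, α⟫ = 0 := by
        push_cast at hm
        field_simp at hm
        linarith
      have : srefL α β = β := by
        rw [srefL_apply, hba]
        simp
      rwa [this]
    · -- k = 1
      have hone : srefL α β = β + α := by
        rw [srefL_apply, hm]
        push_cast
        rw [neg_smul, one_smul, sub_neg_eq_add]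
      have hsum : β + α ∈ Φ := by rw [← hone]; exact sref_root_mem hΦ hαΦ hβΦ
      have : β + α ∈ Φpos := hclos β hβ α hα hsum
      rw [hone] at hflip
      exact hflip this
    · -- k + 2
      push_cast at hm
      have hba : ⟪β, α⟫ = -((k : ℝ) + 2) * ⟪α, α⟫ / 2 := by
        field_simp [haa.ne'] at hm ⊢
        linarith
      have hbneg : ⟪β, α⟫ < 0 := by nlinarith [haa]
      have hβnα : β ≠ -α := fun e => hasym α hα (e ▸ hβ)
      have hβ1Φ : α + β ∈ Φ := root_sum_mem hΦ hαΦ hβΦ hbneg hβnα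
      have hβ1 : α + β ∈ Φpos := hclos α hα β hβ hβ1Φ
      have hsγ : srefL α β ∈ Φ := sref_root_mem hΦ hαΦ hβΦ
      have hγ : -(srefL α β) ∈ Φpos := by
        rcases htot _ hsγ with h | h
        · exact absurd h hflip
        · exact h
      have hγΦ : -(srefL α β) ∈ Φ := hsub hγ
      have hγα : ⟪-(srefL α β), α⟫ < 0 := by
        rw [inner_neg_left, inner_srefL_left, neg_neg]
        exact hbneg
      have hγnα : -(srefL α β) ≠ -α := by
        intro e
        have h1 : srefL α β = α := by
          have := congrArg Neg.neg e
          rwa [neg_neg, neg_neg] at this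
        have hb : β = -α := by
          have h2 := congrArg (srefL α) h1
          rwa [srefL_srefL, srefL_self hα0] at h2
        exact hβnα hb
      have hαγΦ : α + -(srefL α β) ∈ Φ := root_sum_mem hΦ hαΦ hγΦ hγα hγnα
      have hαγ : α + -(srefL α β) ∈ Φpos := hclos α hα _ hγ hαγΦ
      have hm1 : (2 * ⟪α + β, α⟫ / ⟪α, α⟫ : ℝ) = -((k : ℕ) : ℝ) := by
        rw [inner_add_left]
        push_cast
        field_simp [haa.ne']
        linarith
      have heq : srefL α (α + β) = -(α + -(srefL α β)) := by
        rw [map_add, srefL_self hα0]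
        abel
      have hflip1 : srefL α (α + β) ∉ Φpos := by
        rw [heq]
        exact hasym _ hαγ
      exact ih k (by omega) (α + β) hβ1 hflip1 hm1

lemma flip_inner_pos {Φ Φpos : Finset V} (hΦ : IsRootSystem Φ) (hpos : IsPositiveSystem Φ Φpos)
    {α β : V} (hα : α ∈ Φpos) (hβ : β ∈ Φpos) (hflip : srefL α β ∉ Φpos) : 0 < ⟪β, α⟫ := by
  have hαΦ : α ∈ Φ := hpos.1 hα
  have hβΦ : β ∈ Φ := hpos.1 hβ
  have haa := ipos (root_nonzero hΦ hαΦ)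
  obtain ⟨n, hn⟩ := hΦ.2.2.2.1 α hαΦ β hβΦ
  rcases lt_or_ge 0 ⟪β, α⟫ with h | h
  · exact h
  · exfalso
    have hn0 : n ≤ 0 := by
      have h2 : (n : ℝ) ≤ 0 := by
        rw [← hn]
        exact div_nonpos_of_nonpos_of_nonneg (by linarith) haa.le
      exact_mod_cast h2
    apply flip_aux hΦ hpos hα (-n).toNat β hβ hflip
    rw [hn]
    have hnn : (0 : ℤ) ≤ -n := by omega
    have h3 : (((-n).toNat : ℕ) : ℝ) = -(n : ℝ) := by
      have h4 := Int.toNat_of_nonneg hnn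
      exact_mod_cast congrArg (fun z : ℤ => (z : ℝ)) h4
    rw [h3, neg_neg]

lemma rho_pos {Φ Φpos : Finset V} [DecidableEq V] (hΦ : IsRootSystem Φ)
    (hpos : IsPositiveSystem Φ Φpos) {α : V} (hα : α ∈ Φpos) :
    0 < ⟪∑ β ∈ Φpos, β, α⟫ := by
  have hαΦ : α ∈ Φ := hpos.1 hα
  have hα0 : α ≠ 0 := root_nonzero hΦ hαΦ
  have haa := ipos hα0
  rw [sum_inner]
  rw [← Finset.sum_filter_add_sum_filter_not Φpos (fun β => srefL α β ∈ Φpos)]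
  have hP : ∑ β ∈ Φpos.filter (fun β => srefL α β ∈ Φpos), ⟪β, α⟫ = 0 := by
    have hrev : ∑ β ∈ Φpos.filter (fun β => srefL α β ∈ Φpos), ⟪β, α⟫
        = ∑ β ∈ Φpos.filter (fun β => srefL α β ∈ Φpos), -⟪β, α⟫ := by
      apply Finset.sum_nbij' (srefL α) (srefL α)
      · intro a ha
        rw [Finset.mem_filter] at ha ⊢
        exact ⟨ha.2, by rw [srefL_srefL]; exact ha.1⟩
      · intro a ha
        rw [Finset.mem_filter] at ha ⊢
        exact ⟨ha.2, by rw [srefL_srefL]; exact ha.1⟩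
      · intro a _; exact srefL_srefL α a
      · intro a _; exact srefL_srefL α a
      · intro a _
        rw [inner_srefL_left, neg_neg]
    have h2 : ∑ β ∈ Φpos.filter (fun β => srefL α β ∈ Φpos), -⟪β, α⟫
        = -∑ β ∈ Φpos.filter (fun β => srefL α β ∈ Φpos), ⟪β, α⟫ := by
      rw [Finset.sum_neg_distrib]
    rw [h2] at hrev
    linarith
  have hN : 0 < ∑ β ∈ Φpos.filter (fun β => srefL α β ∉ Φpos), ⟪β, α⟫ := by
    apply Finset.sum_pos
    · intro β hb
      rw [Finset.mem_filter] at hb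
      exact flip_inner_pos hΦ hpos hα hb.1 hb.2
    · refine ⟨α, ?_⟩
      rw [Finset.mem_filter]
      refine ⟨hα, ?_⟩
      rw [srefL_self hα0]
      exact hpos.2.2.1 α hα
  linarith

lemma rho_ne_zero {Φ Φpos : Finset V} [DecidableEq V] (hΦ : IsRootSystem Φ)
    (hpos : IsPositiveSystem Φ Φpos) {β : V} (hβ : β ∈ Φ) :
    ⟪∑ γ ∈ Φpos, γ, β⟫ ≠ 0 := by
  rcases hpos.2.1 β hβ with h | h
  · exact (rho_pos hΦ hpos h).ne'
  · have h2 := rho_pos hΦ hpos h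
    rw [inner_neg_right] at h2
    intro e
    rw [e] at h2
    simp at h2

end SpinAux3

section SpinAux4

variable {V : Type*} [NormedAddCommGroup V] [InnerProductSpace ℝ V]

local notation "⟪" x ", " y "⟫" => @inner ℝ _ _ x y

lemma weyl_props {Φ : Finset V} [DecidableEq V] (hΦ : IsRootSystem Φ) {w : V ≃ₗ[ℝ] V}
    (hw : w ∈ WeylGroup Φ) :
    (∀ x y : V, ⟪w x, w y⟫ = ⟪x, y⟫) ∧ (∀ β ∈ Φ, w β ∈ Φ) := by
  induction hw using Subgroup.closure_induction with
  | mem u hu =>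
    obtain ⟨α, hα, hu⟩ := hu
    have hα0 : α ≠ 0 := root_nonzero hΦ hα
    have hfun : ∀ x, u x = srefL α x := fun x => hu x
    constructor
    · intro x y
      rw [hfun, hfun]
      exact inner_srefL hα0 x y
    · intro β hβ
      rw [hfun]
      exact sref_root_mem hΦ hα hβ
  | one => exact ⟨fun x y => rfl, fun β hβ => hβ⟩
  | mul u v hu hv ihu ihv =>
    constructor
    · intro x y
      rw [show (u * v) x = u (v x) from rfl, show (u * v) y = u (v y) from rfl, ihu.1, ihv.1]
    · intro β hβ
      exact ihu.2 _ (ihv.2 β hβ)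
  | inv u hu ihu =>
    constructor
    · intro x y
      have h1 := ihu.1 (u⁻¹ x) (u⁻¹ y)
      rw [show u (u⁻¹ x) = x from u.apply_symm_apply x,
        show u (u⁻¹ y) = y from u.apply_symm_apply y] at h1
      exact h1.symm
    · intro β hβ
      have himg : Φ.image (fun b => u b) = Φ := by
        apply Finset.eq_of_subset_of_card_le
        · intro b hb
          rw [Finset.mem_image] at hb
          obtain ⟨a, ha, rfl⟩ := hb
          exact ihu.2 a ha
        · rw [Finset.card_image_of_injective _ u.injective]
      rw [← himg, Finset.mem_image] at hβ
      obtain ⟨a, ha, hab⟩ := hβ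
      have h2 : u⁻¹ β = a := by rw [← hab]; exact u.symm_apply_apply a
      rw [h2]; exact ha

lemma spin_eq {Φpos A : Finset V} [DecidableEq V] (hA : A ⊆ Φpos) :
    spinWeight Φpos A = (2⁻¹ : ℝ) • ∑ α ∈ Φpos, α - ∑ α ∈ A, α := by
  rw [spinWeight, Finset.sum_sdiff_eq_sub hA, sub_sub, smul_sub]
  congr 1
  rw [← two_smul ℝ (∑ α ∈ A, α), smul_smul]
  norm_num

lemma not_sat_exists {Φ Φpos A : Finset V} [DecidableEq V] (hΦ : IsRootSystem Φ)
    (hpos : IsPositiveSystem Φ Φpos) (hA : A ⊆ Φpos) (hns : ¬Saturated Φ Φpos A) :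
    ∃ A', A' ⊆ Φpos ∧ A' ≠ A ∧ ∑ α ∈ A', α = ∑ α ∈ A, α := by
  rw [Saturated, not_and_or] at hns
  rcases hns with h | h
  · push_neg at h
    obtain ⟨α, hαA, β, hβA, hsum, hnotin⟩ := h
    have hαp := hA hαA
    have hβp := hA hβA
    have hαΦ := hpos.1 hαp
    have hne : α ≠ β := by
      rintro rfl
      have h2 : (2 : ℝ) • α ∈ Φ := by rw [two_smul]; exact hsum
      rcases hΦ.2.2.2.2 α hαΦ 2 h2 with h | h <;> norm_num at h
    have hβ0 : β ≠ 0 := root_nonzero hΦ (hpos.1 hβp)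
    refine ⟨insert (α + β) ((A.erase α).erase β), ?_, ?_, ?_⟩
    · intro x hx
      rcases Finset.mem_insert.mp hx with rfl | hx
      · exact hpos.2.2.2 α hαp β hβp hsum
      · exact hA (Finset.mem_of_mem_erase (Finset.mem_of_mem_erase hx))
    · intro e
      have hmem : α ∈ insert (α + β) ((A.erase α).erase β) := by rw [e]; exact hαA
      rcases Finset.mem_insert.mp hmem with h1 | h1
      · exact hβ0 (left_eq_add.mp h1)
      · exact Finset.notMem_erase α A (Finset.mem_of_mem_erase h1)
    · have hnm : (α + β) ∉ (A.erase α).erase β :=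
        fun hc => hnotin (Finset.mem_of_mem_erase (Finset.mem_of_mem_erase hc))
      rw [Finset.sum_insert hnm,
        Finset.sum_erase_eq_sub (Finset.mem_erase.mpr ⟨Ne.symm hne, hβA⟩),
        Finset.sum_erase_eq_sub hαA]
      abel
  · push_neg at h
    obtain ⟨γ, hγp, δ, hδp, hγA, hδA, hsumΦ, hin⟩ := h
    have hγΦ := hpos.1 hγp
    have hne : γ ≠ δ := by
      rintro rfl
      have h2 : (2 : ℝ) • γ ∈ Φ := by rw [two_smul]; exact hsumΦ
      rcases hΦ.2.2.2.2 γ hγΦ 2 h2 with h | h <;> norm_num at h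
    refine ⟨insert γ (insert δ (A.erase (γ + δ))), ?_, ?_, ?_⟩
    · intro x hx
      rcases Finset.mem_insert.mp hx with rfl | hx
      · exact hγp
      rcases Finset.mem_insert.mp hx with rfl | hx
      · exact hδp
      · exact hA (Finset.mem_of_mem_erase hx)
    · intro e
      have hmem : γ ∈ A := by
        rw [← e]
        exact Finset.mem_insert_self γ _
      exact hγA hmem
    · have h1 : γ ∉ insert δ (A.erase (γ + δ)) := by
        intro hc
        rcases Finset.mem_insert.mp hc with h2 | h2
        · exact hne h2
        · exact hγA (Finset.mem_of_mem_erase h2)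
      have h2 : δ ∉ A.erase (γ + δ) := fun hc => hδA (Finset.mem_of_mem_erase hc)
      rw [Finset.sum_insert h1, Finset.sum_insert h2, Finset.sum_erase_eq_sub hin]
      abel

end SpinAux4

section SpinAux5

variable {V : Type*} [NormedAddCommGroup V] [InnerProductSpace ℝ V]

local notation "⟪" x ", " y "⟫" => @inner ℝ _ _ x y

lemma cs_strict {Φ : Finset V} (hΦ : IsRootSystem Φ) {α β : V} (hα : α ∈ Φ) (hβ : β ∈ Φ)
    (h1 : β ≠ α) (h2 : β ≠ -α) : ⟪β, α⟫ * ⟪β, α⟫ < ⟪α, α⟫ * ⟪β, β⟫ := by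
  have hα0 := root_nonzero hΦ hα
  have hna : ‖α‖ ≠ 0 := norm_ne_zero_iff.mpr hα0
  have hprop : ∀ t : ℝ, β ≠ t • α := by
    intro t he
    rcases hΦ.2.2.2.2 α hα t (he ▸ hβ) with h | h
    · exact h1 (by rw [he, h, one_smul])
    · exact h2 (by rw [he, h, neg_one_smul])
  have hs1 : ⟪β, α⟫ < ‖β‖ * ‖α‖ := by
    apply inner_lt_norm_mul_iff_real.mpr
    intro hcon
    apply hprop (‖β‖ / ‖α‖)
    have h3 : β = ‖α‖⁻¹ • (‖β‖ • α) := by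
      rw [← hcon, smul_smul, inv_mul_cancel₀ hna, one_smul]
    have h4 : ‖α‖⁻¹ * ‖β‖ = ‖β‖ / ‖α‖ := by rw [div_eq_mul_inv, mul_comm]
    rw [smul_smul, h4] at h3
    exact h3
  have hs2 : -⟪β, α⟫ < ‖β‖ * ‖α‖ := by
    have h4 : ⟪-β, α⟫ < ‖-β‖ * ‖α‖ := by
      apply inner_lt_norm_mul_iff_real.mpr
      intro hcon
      rw [norm_neg] at hcon
      apply hprop (-(‖β‖ / ‖α‖))
      have h3 : -β = ‖α‖⁻¹ • (‖β‖ • α) := by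
        rw [← hcon, smul_smul, inv_mul_cancel₀ hna, one_smul]
      have h5 : β = -(‖α‖⁻¹ * ‖β‖) • α := by
        rw [neg_smul, ← smul_smul, ← h3, neg_neg]
      have h6 : -(‖α‖⁻¹ * ‖β‖) = -(‖β‖ / ‖α‖) := by rw [div_eq_mul_inv, mul_comm]
      rw [h6] at h5
      exact h5
    rwa [inner_neg_left, norm_neg] at h4
  have e1 : ⟪α, α⟫ = ‖α‖ * ‖α‖ := real_inner_self_eq_norm_mul_norm α
  have e2 : ⟪β, β⟫ = ‖β‖ * ‖β‖ := real_inner_self_eq_norm_mul_norm β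
  nlinarith [mul_pos (by linarith : (0:ℝ) < ‖β‖ * ‖α‖ - ⟪β, α⟫)
    (by linarith : (0:ℝ) < ‖β‖ * ‖α‖ + ⟪β, α⟫)]

set_option maxHeartbeats 2000000 in
lemma sat_to_weyl {Φ Φpos : Finset V} [DecidableEq V] (hΦ : IsRootSystem Φ)
    (hpos : IsPositiveSystem Φ Φpos) :
    ∀ n : ℕ, ∀ A : Finset V, A.card = n → A ⊆ Φpos → Saturated Φ Φpos A →
      ∃ w ∈ WeylGroup Φ, spinWeight Φpos A = w ((2⁻¹ : ℝ) • ∑ α ∈ Φpos, α) := by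
  intro n
  induction n using Nat.strong_induction_on with
  | _ n ih =>
    intro A hcard hA hsat
    rcases Nat.eq_zero_or_pos n with rfl | hn
    · have hAe : A = ∅ := Finset.card_eq_zero.mp hcard
      subst hAe
      refine ⟨1, one_mem _, ?_⟩
      rw [spin_eq (Finset.empty_subset _)]
      simp
    · have hAne : A.Nonempty := Finset.card_pos.mp (hcard ▸ hn)
      obtain ⟨α, hαA, hmin⟩ := Finset.exists_min_image A (fun β => ⟪∑ γ ∈ Φpos, γ, β⟫) hAne
      have hαp : α ∈ Φpos := hA hαA
      have hαΦ : α ∈ Φ := hpos.1 hαp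
      have hα0 : α ≠ 0 := root_nonzero hΦ hαΦ
      have haa := ipos hα0
      have hindec : ∀ β ∈ Φpos, ∀ γ ∈ Φpos, β + γ ≠ α := by
        intro β hβ γ hγ he
        have hone : β ∈ A ∨ γ ∈ A := by
          by_contra hc
          push_neg at hc
          exact (hsat.2 β hβ γ hγ hc.1 hc.2 (he ▸ hαΦ)) (he ▸ hαA)
        have hrβ := rho_pos hΦ hpos hβ
        have hrγ := rho_pos hΦ hpos hγ
        have hsum : ⟪∑ γ' ∈ Φpos, γ', α⟫ = ⟪∑ γ' ∈ Φpos, γ', β⟫ + ⟪∑ γ' ∈ Φpos, γ', γ⟫ := by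
          rw [← inner_add_right, he]
        rcases hone with hβA | hγA
        · have := hmin β hβA
          linarith
        · have := hmin γ hγA
          linarith
      have hkey : ∀ β ∈ Φpos, β ≠ α → srefL α β ∈ Φpos := by
        intro β hβ hne
        by_contra hflip
        have hβΦ : β ∈ Φ := hpos.1 hβ
        have hβ0 : β ≠ 0 := root_nonzero hΦ hβΦ
        have hbb := ipos hβ0
        have hba := flip_inner_pos hΦ hpos hαp hβ hflip
        obtain ⟨m, hm⟩ := hΦ.2.2.2.1 α hαΦ β hβΦ
        obtain ⟨p, hp⟩ := hΦ.2.2.2.1 β hβΦ α hαΦ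
        have hm1 : 1 ≤ m := by
          have h2 : (0:ℝ) < (m:ℝ) := by rw [← hm]; positivity
          have : 0 < m := by exact_mod_cast h2
          omega
        have hp1 : 1 ≤ p := by
          have hab : 0 < ⟪α, β⟫ := by rwa [real_inner_comm]
          have h2 : (0:ℝ) < (p:ℝ) := by rw [← hp]; positivity
          have : 0 < p := by exact_mod_cast h2
          omega
        have hβnegα : β ≠ -α := fun e => hpos.2.2.1 α hαp (e ▸ hβ)
        have hCS := cs_strict hΦ hαΦ hβΦ hne hβnegα
        have hmp4 : (m:ℝ) * (p:ℝ) < 4 := by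
          rw [← hm, ← hp, div_mul_div_comm, div_lt_iff₀ (by positivity)]
          rw [real_inner_comm β α]
          nlinarith [hCS]
        have hmp : m * p < 4 := by exact_mod_cast (by push_cast; exact hmp4 : ((m * p : ℤ):ℝ) < 4)
        have hm3 : m ≤ 3 := by nlinarith
        have hμ : -(srefL α β) ∈ Φpos := by
          rcases hpos.2.1 _ (sref_root_mem hΦ hαΦ hβΦ) with h | h
          · exact absurd h hflip
          · exact h
        interval_cases m
        · -- m = 1
          have hv : -(srefL α β) = α - β := by
            rw [srefL_apply, hm]
            push_cast
            rw [one_smul, neg_sub]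
          exact hindec β hβ (α - β) (hv ▸ hμ) (by abel)
        · -- m = 2
          have hpeq : p = 1 := by nlinarith
          have hν : α - β ∈ Φ := by
            have h2 := sref_root_mem hΦ hβΦ hαΦ
            rw [srefL_apply, hp, hpeq] at h2
            push_cast at h2
            rwa [one_smul] at h2
          rcases hpos.2.1 _ hν with hν1 | hν2
          · exact hindec β hβ (α - β) hν1 (by abel)
          · rw [neg_sub] at hν2
            have hv : -(srefL α β) = α + α - β := by
              rw [srefL_apply, hm]
              push_cast
              rw [show ((2:ℝ)) • α = α + α from two_smul ℝ α, neg_sub]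
            exact hindec (α + α - β) (hv ▸ hμ) (β - α) hν2 (by abel)
        · -- m = 3
          have hpeq : p = 1 := by nlinarith
          have hν : α - β ∈ Φ := by
            have h2 := sref_root_mem hΦ hβΦ hαΦ
            rw [srefL_apply, hp, hpeq] at h2
            push_cast at h2
            rwa [one_smul] at h2
          rcases hpos.2.1 _ hν with hν1 | hν2
          · exact hindec β hβ (α - β) hν1 (by abel)
          · rw [neg_sub] at hν2
            have hδΦ : β - α ∈ Φ := hpos.1 hν2
            have hbaval : ⟪β, α⟫ = 3 * ⟪α, α⟫ / 2 := by
              have := hm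
              push_cast at this
              field_simp [haa.ne'] at this ⊢
              linarith
            have hsc : (2 * ⟪β - α, α⟫ / ⟪α, α⟫ : ℝ) = 1 := by
              rw [inner_sub_left]
              field_simp [haa.ne']
              linarith
            have hb2 : β - α - α ∈ Φ := by
              have h2 := sref_root_mem hΦ hαΦ hδΦ
              rw [srefL_apply, hsc, one_smul] at h2
              exact h2
            rcases hpos.2.1 _ hb2 with hc1 | hc2
            · have hv : -(srefL α β) = α + α + α - β := by
                rw [srefL_apply, hm]
                push_cast
                rw [show ((3:ℝ)) • α = α + α + α from by
                  rw [show (3:ℝ) = 1 + 1 + 1 by norm_num, add_smul, add_smul, one_smul]]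
                rw [neg_sub]
              exact hindec (α + α + α - β) (hv ▸ hμ) (β - α - α) hc1 (by abel)
            · have hc2' : α + α - β ∈ Φpos := by
                have : -(β - α - α) = α + α - β := by abel
                rwa [this] at hc2
              exact hindec (α + α - β) hc2' (β - α) hν2 (by abel)
      -- the reflection permutes Φpos.erase α
      have himg : (Φpos.erase α).image (fun b => srefL α b) = Φpos.erase α := by
        apply Finset.eq_of_subset_of_card_le
        · intro b hb
          rw [Finset.mem_image] at hb
          obtain ⟨c, hc, rfl⟩ := hb
          rw [Finset.mem_erase] at hc ⊢
          refine ⟨?_, hkey c hc.2 hc.1⟩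
          intro e
          have hc' : c = -α := by
            have h2 := congrArg (srefL α) e
            rwa [srefL_srefL, srefL_self hα0] at h2
          exact hpos.2.2.1 α hαp (hc' ▸ hc.2)
        · rw [Finset.card_image_of_injective _ srefL_inj]
      have hsum2 : srefL α (∑ β ∈ Φpos, β) = (∑ β ∈ Φpos, β) - α - α := by
        rw [map_sum]
        have h1 : ∑ β ∈ Φpos.erase α, srefL α β + srefL α α = ∑ β ∈ Φpos, srefL α β :=
          Finset.sum_erase_add _ _ hαp
        have h2 : ∑ β ∈ Φpos.erase α, srefL α β = ∑ β ∈ Φpos.erase α, β := by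
          calc ∑ β ∈ Φpos.erase α, srefL α β
              = ∑ β ∈ (Φpos.erase α).image (fun b => srefL α b), β :=
                (Finset.sum_image (f := fun b => b) (g := fun b => srefL α b)
                  (fun x _ y _ h => srefL_inj h)).symm
            _ = ∑ β ∈ Φpos.erase α, β := by rw [himg]
        rw [← h1, h2, srefL_self hα0, Finset.sum_erase_eq_sub hαp]
        abel
      have hρ : srefL α ((2⁻¹ : ℝ) • ∑ β ∈ Φpos, β) = (2⁻¹ : ℝ) • (∑ β ∈ Φpos, β) - α := by
        rw [map_smul, hsum2, smul_sub, smul_sub, sub_sub, ← add_smul]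
        norm_num
      set A' := (A.erase α).image (fun b => srefL α b) with hA'def
      have hA'sub : A' ⊆ Φpos := by
        intro x hx
        rw [hA'def, Finset.mem_image] at hx
        obtain ⟨c, hc, rfl⟩ := hx
        rw [Finset.mem_erase] at hc
        exact hkey c (hA hc.2) hc.1
      have hA'card : A'.card = n - 1 := by
        rw [hA'def, Finset.card_image_of_injective _ srefL_inj,
          Finset.card_erase_of_mem hαA, hcard]
      have hnotA : ∀ z ∈ Φpos, z ≠ α → z ∉ A' → srefL α z ∉ A := by
        intro z hz hzα hzA' hcon
        apply hzA'
        have hne2 : srefL α z ≠ α := by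
          intro e
          have h3 := congrArg (srefL α) e
          rw [srefL_srefL, srefL_self hα0] at h3
          exact hpos.2.2.1 α hαp (h3 ▸ hz)
        have hzz : z = srefL α (srefL α z) := (srefL_srefL α z).symm
        rw [hA'def, hzz]
        exact Finset.mem_image_of_mem _ (Finset.mem_erase.mpr ⟨hne2, hcon⟩)
      have hA'sat : Saturated Φ Φpos A' := by
        constructor
        · intro x hx y hy hxy
          rw [hA'def, Finset.mem_image] at hx hy
          obtain ⟨b, hb, rfl⟩ := hx
          obtain ⟨c, hc, rfl⟩ := hy
          rw [← map_add] at hxy ⊢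
          have hbc : b + c ∈ Φ := by
            have h2 := sref_root_mem hΦ hαΦ hxy
            rwa [srefL_srefL] at h2
          have hbcA : b + c ∈ A :=
            hsat.1 b (Finset.mem_of_mem_erase hb) c (Finset.mem_of_mem_erase hc) hbc
          have hbcne : b + c ≠ α :=
            hindec b (hA (Finset.mem_of_mem_erase hb)) c (hA (Finset.mem_of_mem_erase hc))
          rw [hA'def]
          exact Finset.mem_image_of_mem _ (Finset.mem_erase.mpr ⟨hbcne, hbcA⟩)
        · intro x hx y hy hxA' hyA' hxyΦ hmem
          rw [hA'def, Finset.mem_image] at hmem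
          obtain ⟨c, hc, hceq⟩ := hmem
          have hcA : c ∈ A := Finset.mem_of_mem_erase hc
          have hcval : c = srefL α x + srefL α y := by
            have h2 := congrArg (srefL α) hceq
            rwa [srefL_srefL, map_add] at h2
          by_cases hxα : x = α
          · by_cases hyα : y = α
            · rw [hxα, hyα] at hxyΦ
              have h2 : (2:ℝ) • α ∈ Φ := by rw [two_smul]; exact hxyΦ
              rcases hΦ.2.2.2.2 α hαΦ 2 h2 with h | h <;> norm_num at h
            · have hyp : srefL α y ∈ Φpos := hkey y hy hyα
              have hynA : srefL α y ∉ A := hnotA y hy hyα hyA'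
              have hsum : c + α = srefL α y := by
                rw [hcval, hxα, srefL_self hα0]
                abel
              have h2 : c + α ∈ A :=
                hsat.1 c hcA α hαA (by rw [hsum]; exact hpos.1 hyp)
              rw [hsum] at h2
              exact hynA h2
          · by_cases hyα : y = α
            · have hxp : srefL α x ∈ Φpos := hkey x hx hxα
              have hxnA : srefL α x ∉ A := hnotA x hx hxα hxA'
              have hsum : c + α = srefL α x := by
                rw [hcval, hyα, srefL_self hα0]
                abel
              have h2 : c + α ∈ A :=
                hsat.1 c hcA α hαA (by rw [hsum]; exact hpos.1 hxp)
              rw [hsum] at h2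
              exact hxnA h2
            · have hxp : srefL α x ∈ Φpos := hkey x hx hxα
              have hyp : srefL α y ∈ Φpos := hkey y hy hyα
              have hxnA : srefL α x ∉ A := hnotA x hx hxα hxA'
              have hynA : srefL α y ∉ A := hnotA y hy hyα hyA'
              have h2 : srefL α x + srefL α y ∉ A :=
                hsat.2 _ hxp _ hyp hxnA hynA (by rw [← hcval]; exact hpos.1 (hA hcA))
              exact h2 (hcval ▸ hcA)
      obtain ⟨w', hw', hw'eq⟩ := ih (n - 1) (by omega) A' hA'card hA'sub hA'sat
      refine ⟨srefE α * w', mul_mem (srefE_mem_weyl hαΦ) hw', ?_⟩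
      have hsA' : ∑ β ∈ A', β = srefL α (∑ β ∈ A.erase α, β) := by
        rw [map_sum, hA'def]
        exact Finset.sum_image (f := fun b => b) (g := fun b => srefL α b)
          (fun x _ y _ h => srefL_inj h)
      have hsA'' : srefL α (∑ β ∈ A', β) = ∑ β ∈ A.erase α, β := by
        rw [hsA', srefL_srefL]
      have hfinal : spinWeight Φpos A = srefL α (spinWeight Φpos A') := by
        rw [spin_eq hA, spin_eq hA'sub, map_sub, hρ, hsA'', Finset.sum_erase_eq_sub hαA]
        abel
      rw [hfinal, hw'eq]
      rfl

end SpinAux5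

section SpinAux6

variable {V : Type*} [NormedAddCommGroup V] [InnerProductSpace ℝ V]

local notation "⟪" x ", " y "⟫" => @inner ℝ _ _ x y

set_option maxHeartbeats 1000000 in
lemma weyl_unique {Φ Φpos : Finset V} [DecidableEq V] (hΦ : IsRootSystem Φ)
    (hpos : IsPositiveSystem Φ Φpos) {w : V ≃ₗ[ℝ] V} (hw : w ∈ WeylGroup Φ)
    {A' : Finset V} (hA' : A' ⊆ Φpos)
    (hμ : spinWeight Φpos A' = w ((2⁻¹ : ℝ) • ∑ γ ∈ Φpos, γ)) :
    A' = Φpos.filter (fun α => ⟪α, w ((2⁻¹ : ℝ) • ∑ γ ∈ Φpos, γ)⟫ < 0) := by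
  obtain ⟨hinner, hroots⟩ := weyl_props hΦ hw
  set ρ2 : V := ∑ γ ∈ Φpos, γ with hρ2
  set ρ : V := (2⁻¹ : ℝ) • ρ2 with hρ
  set ν : V := w ρ with hν
  have hws : ∀ x : V, w (w⁻¹ x) = x := fun x => w.apply_symm_apply x
  have hsw : ∀ x : V, w⁻¹ (w x) = x := fun x => w.symm_apply_apply x
  have hwinv : ∀ x : V, ⟪x, ν⟫ = ⟪w⁻¹ x, ρ⟫ := by
    intro x
    have h1 := hinner (w⁻¹ x) ρ
    rwa [hws x] at h1
  have hρpos : ∀ β ∈ Φpos, 0 < ⟪β, ρ⟫ := by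
    intro β hβ
    have h2 := rho_pos hΦ hpos hβ
    rw [← hρ2] at h2
    rw [hρ, real_inner_smul_right, real_inner_comm]
    exact mul_pos (by norm_num) h2
  have hg0 : ∀ α ∈ Φpos, ⟪α, ν⟫ ≠ 0 := by
    intro α hα
    rw [hwinv]
    have hα' : w⁻¹ α ∈ Φ := (weyl_props hΦ (inv_mem hw)).2 α (hpos.1 hα)
    have h2 := rho_ne_zero hΦ hpos hα'
    rw [← hρ2] at h2
    rw [hρ, real_inner_smul_right, real_inner_comm]
    intro e
    exact h2 ((mul_eq_zero.mp e).resolve_left (by norm_num))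
  have hkey0 : ρ - ∑ α ∈ A', α = ν := by
    rw [hν, hρ, hρ2, ← spin_eq hA']
    exact hμ
  have hsplit : ∑ α ∈ Φpos, ((2⁻¹:ℝ) * ⟪α, ν⟫ - (if α ∈ A' then ⟪α, ν⟫ else 0)) = ⟪ρ, ρ⟫ := by
    rw [Finset.sum_sub_distrib, Finset.sum_ite_mem, Finset.inter_eq_right.mpr hA',
      ← Finset.mul_sum, ← sum_inner, ← sum_inner, ← real_inner_smul_left, ← hρ2, ← hρ,
      ← inner_sub_left, hkey0, hν]
    exact hinner ρ ρ
  have habs : ∑ α ∈ Φpos, (2⁻¹:ℝ) * |⟪α, ν⟫| = ⟪ρ, ρ⟫ := by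
    have hbij : ∑ α ∈ Φpos, |⟪α, ν⟫| = ∑ α ∈ Φpos, ⟪α, ρ⟫ := by
      apply Finset.sum_nbij' (fun α => if w⁻¹ α ∈ Φpos then w⁻¹ α else -(w⁻¹ α))
        (fun β => if w β ∈ Φpos then w β else -(w β))
      · intro a ha
        by_cases h : w⁻¹ a ∈ Φpos
        · rw [if_pos h]; exact h
        · simp only [h, if_false]
          have haΦ : w⁻¹ a ∈ Φ := (weyl_props hΦ (inv_mem hw)).2 a (hpos.1 ha)
          rcases hpos.2.1 _ haΦ with h2 | h2
          · exact absurd h2 h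
          · exact h2
      · intro b hb
        by_cases h : w b ∈ Φpos
        · simpa [h]
        · simp only [h, if_false]
          have hbΦ : w b ∈ Φ := hroots b (hpos.1 hb)
          rcases hpos.2.1 _ hbΦ with h2 | h2
          · exact absurd h2 h
          · exact h2
      · intro a ha
        by_cases h : w⁻¹ a ∈ Φpos
        · rw [if_pos h, if_pos (by rw [hws a]; exact ha), hws a]
        · rw [if_neg h, map_neg, hws a, if_neg (hpos.2.2.1 a ha), neg_neg]
      · intro b hb
        by_cases h : w b ∈ Φpos
        · rw [if_pos h, if_pos (by rw [hsw b]; exact hb), hsw b]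
        · rw [if_neg h, map_neg, hsw b, if_neg (hpos.2.2.1 b hb), neg_neg]
      · intro a ha
        rw [hwinv]
        by_cases h : w⁻¹ a ∈ Φpos
        · rw [if_pos h]
          exact abs_of_pos (hρpos _ h)
        · rw [if_neg h]
          have haΦ : w⁻¹ a ∈ Φ := (weyl_props hΦ (inv_mem hw)).2 a (hpos.1 ha)
          have h2 : -(w⁻¹ a) ∈ Φpos := by
            rcases hpos.2.1 _ haΦ with h2 | h2
            · exact absurd h2 h
            · exact h2
          have h3 := hρpos _ h2
          rw [inner_neg_left] at h3
          rw [abs_of_neg (by linarith), inner_neg_left]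
      -- done bijection
    rw [← Finset.mul_sum, hbij, ← sum_inner, ← hρ2]
    rw [hρ, real_inner_smul_left, real_inner_smul_right]
  have hle : ∀ α ∈ Φpos,
      ((2⁻¹:ℝ) * ⟪α, ν⟫ - (if α ∈ A' then ⟪α, ν⟫ else 0)) ≤ (2⁻¹:ℝ) * |⟪α, ν⟫| := by
    intro α hα
    have h1 := le_abs_self ⟪α, ν⟫
    have h2 := neg_abs_le ⟪α, ν⟫
    by_cases h : α ∈ A'
    · rw [if_pos h]; linarith
    · rw [if_neg h]; linarith
  have heqterm := (Finset.sum_eq_sum_iff_of_le hle).mp (by rw [hsplit, habs])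
  ext x
  rw [Finset.mem_filter]
  constructor
  · intro hx
    have hxp := hA' hx
    have h3 := heqterm x hxp
    rw [if_pos hx] at h3
    have h4 := hg0 x hxp
    refine ⟨hxp, ?_⟩
    rcases abs_cases ⟪x, ν⟫ with h5 | h5
    · exfalso
      rw [h5.1] at h3
      apply h4
      linarith
    · exact h5.2
  · rintro ⟨hxp, hneg⟩
    by_contra hxA
    have h3 := heqterm x hxp
    rw [if_neg hxA] at h3
    rw [abs_of_neg hneg] at h3
    exact (hg0 x hxp) (by linarith)

end SpinAux6

/-- For a weight `μ = μ(A)` of the spin module of the Cartan subalgebra, the following are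
equivalent: (1) `mult(μ) = 1`; (2) `A` is saturated; (3) `μ = w(ρ)` for some `w` in the
Weyl group. -/
theorem spinWeight_mult_one_iff {V : Type*} [NormedAddCommGroup V] [InnerProductSpace ℝ V]
    [DecidableEq V] (Φ Φpos : Finset V)
    (hΦ : IsRootSystem Φ) (hpos : IsPositiveSystem Φ Φpos)
    (A : Finset V) (hA : A ⊆ Φpos) :
    ({A' : Finset V | A' ⊆ Φpos ∧ spinWeight Φpos A' = spinWeight Φpos A}.ncard = 1
      ↔ Saturated Φ Φpos A) ∧
    (Saturated Φ Φpos A ↔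
      ∃ w ∈ WeylGroup Φ, spinWeight Φpos A = w ((2⁻¹ : ℝ) • ∑ α ∈ Φpos, α)) := by
  have h23 : Saturated Φ Φpos A →
      ∃ w ∈ WeylGroup Φ, spinWeight Φpos A = w ((2⁻¹ : ℝ) • ∑ α ∈ Φpos, α) :=
    fun hsat => sat_to_weyl hΦ hpos A.card A rfl hA hsat
  have h31 : (∃ w ∈ WeylGroup Φ, spinWeight Φpos A = w ((2⁻¹ : ℝ) • ∑ α ∈ Φpos, α)) →
      {A' : Finset V | A' ⊆ Φpos ∧ spinWeight Φpos A' = spinWeight Φpos A}.ncard = 1 := by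
    rintro ⟨w, hw, hμ⟩
    have hset : {A' : Finset V | A' ⊆ Φpos ∧ spinWeight Φpos A' = spinWeight Φpos A}
        = {A} := by
      ext A'
      simp only [Set.mem_setOf_eq, Set.mem_singleton_iff]
      constructor
      · rintro ⟨hsub, heq⟩
        have h1 := weyl_unique hΦ hpos hw hsub (heq.trans hμ)
        have h2 := weyl_unique hΦ hpos hw hA hμ
        exact h1.trans h2.symm
      · rintro rfl
        exact ⟨hA, rfl⟩
    rw [hset]
    exact Set.ncard_singleton A
  have h12 : {A' : Finset V | A' ⊆ Φpos ∧ spinWeight Φpos A' = spinWeight Φpos A}.ncard = 1 →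
      Saturated Φ Φpos A := by
    intro hone
    by_contra hns
    obtain ⟨A', hsub, hne, hsum⟩ := not_sat_exists hΦ hpos hA hns
    obtain ⟨B, hB⟩ := Set.ncard_eq_one.mp hone
    have hAmem : A ∈ {A' : Finset V | A' ⊆ Φpos ∧ spinWeight Φpos A' = spinWeight Φpos A} :=
      ⟨hA, rfl⟩
    have hA'mem : A' ∈ {A' : Finset V | A' ⊆ Φpos ∧ spinWeight Φpos A' = spinWeight Φpos A} :=
      ⟨hsub, by rw [spin_eq hsub, spin_eq hA, hsum]⟩
    rw [hB] at hAmem hA'mem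
    exact hne ((Set.mem_singleton_iff.mp hA'mem).trans (Set.mem_singleton_iff.mp hAmem).symm)
  exact ⟨⟨h12, fun hsat => h31 (h23 hsat)⟩, ⟨h23, fun hex => h12 (h31 hex)⟩⟩
end

section
/- If A ⊆ Φ⁺ is saturated and nonempty, then A contains at least one simple root. -/
open Finset

/-- A root is simple (with respect to the positive system `Φpos`) if it is positive and is
not the sum of two positive roots. -/
def IsSimpleRoot {V : Type*} [NormedAddCommGroup V] [InnerProductSpace ℝ V]
    (Φpos : Finset V) (α : V) : Prop :=
  α ∈ Φpos ∧ ¬∃ β ∈ Φpos, ∃ γ ∈ Φpos, α = β + γ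

/-- If two roots have negative inner product and are not opposite, their sum is a root. -/
lemma aux_sum_mem {V : Type*} [NormedAddCommGroup V] [InnerProductSpace ℝ V]
    {Φ : Finset V} (hΦ : IsRootSystem Φ) {α β : V} (hα : α ∈ Φ) (hβ : β ∈ Φ)
    (hneg : (inner ℝ α β : ℝ) < 0) (hne : α + β ≠ 0) : α + β ∈ Φ := by
  obtain ⟨h0, -, hrefl, hint, hred⟩ := hΦ
  have hα0 : α ≠ 0 := fun h => h0 (h ▸ hα)
  have hβ0 : β ≠ 0 := fun h => h0 (h ▸ hβ)
  have hαα : (0:ℝ) < inner ℝ α α := by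
    rw [real_inner_self_eq_norm_mul_norm]
    exact mul_pos (norm_pos_iff.mpr hα0) (norm_pos_iff.mpr hα0)
  have hββ : (0:ℝ) < inner ℝ β β := by
    rw [real_inner_self_eq_norm_mul_norm]
    exact mul_pos (norm_pos_iff.mpr hβ0) (norm_pos_iff.mpr hβ0)
  -- β is not a multiple of α
  have hnotpar : ∀ r : ℝ, β ≠ r • α := by
    intro r hr
    rcases hred α hα r (by rw [← hr]; exact hβ) with h1 | h1
    · rw [h1, one_smul] at hr
      rw [hr] at hneg; exact absurd hneg (not_lt.mpr hαα.le)
    · rw [h1, neg_one_smul] at hr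
      exact hne (by rw [hr]; abel)
  obtain ⟨n, hn⟩ := hint α hα β hβ
  obtain ⟨m, hm⟩ := hint β hβ α hα
  have hba : (inner ℝ β α : ℝ) = inner ℝ α β := real_inner_comm α β
  have hnneg : (n:ℝ) < 0 := by
    rw [← hn]
    exact div_neg_of_neg_of_pos (by linarith [hba ▸ hneg]) hαα
  have hmneg : (m:ℝ) < 0 := by
    rw [← hm]
    exact div_neg_of_neg_of_pos (by linarith) hββ
  -- strict Cauchy-Schwarz
  have hcs : (inner ℝ α β : ℝ) * inner ℝ α β < inner ℝ α α * inner ℝ β β := by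
    have hle : |(inner ℝ α β : ℝ)| ≤ ‖α‖ * ‖β‖ := abs_real_inner_le_norm α β
    have hlt : |(inner ℝ α β : ℝ)| < ‖α‖ * ‖β‖ := by
      rcases lt_or_eq_of_le hle with h | h
      · exact h
      · exfalso
        have := (norm_inner_eq_norm_iff (𝕜 := ℝ) hα0 hβ0).mp (by rwa [Real.norm_eq_abs])
        obtain ⟨r, -, hr⟩ := this
        exact hnotpar r hr
    have h1 : (inner ℝ α β : ℝ) * inner ℝ α β = |(inner ℝ α β : ℝ)| * |(inner ℝ α β : ℝ)| := by
      rw [← abs_mul, abs_mul_self]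
    rw [h1, real_inner_self_eq_norm_mul_norm, real_inner_self_eq_norm_mul_norm]
    calc |(inner ℝ α β : ℝ)| * |(inner ℝ α β : ℝ)| < (‖α‖ * ‖β‖) * (‖α‖ * ‖β‖) := by
          exact mul_lt_mul' hlt.le hlt (abs_nonneg _)
            (mul_pos (norm_pos_iff.mpr hα0) (norm_pos_iff.mpr hβ0))
      _ = ‖α‖ * ‖α‖ * (‖β‖ * ‖β‖) := by ring
  have hprod : (n:ℝ) * m < 4 := by
    rw [← hn, ← hm, hba]
    rw [div_mul_div_comm]
    rw [div_lt_iff₀ (by positivity)]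
    nlinarith
  have hn' : n < 0 := by exact_mod_cast hnneg
  have hm' : m < 0 := by exact_mod_cast hmneg
  have hprodZ : n * m < 4 := by exact_mod_cast hprod
  have : n = -1 ∨ m = -1 := by
    by_contra hc
    push_neg at hc
    have : n ≤ -2 := by omega
    have : m ≤ -2 := by omega
    nlinarith
  rcases this with h | h
  · have := hrefl α hα β hβ
    rw [hn, h] at this
    simpa [sub_eq_add_neg, add_comm] using this
  · have := hrefl β hβ α hα
    rw [hm, h] at this
    simpa [sub_eq_add_neg, add_comm] using this

/-- No nonempty multiset of positive roots sums to zero. -/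
lemma aux_sum_ne_zero {V : Type*} [NormedAddCommGroup V] [InnerProductSpace ℝ V]
    {Φ Φpos : Finset V} (hΦ : IsRootSystem Φ) (hpos : IsPositiveSystem Φ Φpos) :
    ∀ N : ℕ, ∀ s : Multiset V, Multiset.card s ≤ N → (∀ x ∈ s, x ∈ Φpos) →
      s ≠ 0 → s.sum ≠ 0 := by
  intro N
  induction N with
  | zero =>
    intro s hcard _ hs0
    simp [Multiset.card_eq_zero.mp (Nat.le_zero.mp hcard)] at hs0
  | succ N ih =>
    intro s hcard hmem hs0 hsum
    classical
    obtain ⟨x, hx⟩ := Multiset.exists_mem_of_ne_zero hs0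
    have hxp : x ∈ Φpos := hmem x hx
    have hxΦ : x ∈ Φ := hpos.1 hxp
    have hx0 : x ≠ 0 := fun h => hΦ.1 (h ▸ hxΦ)
    set rest := s.erase x with hrest
    have hcons : x ::ₘ rest = s := Multiset.cons_erase hx
    have hrsum : rest.sum = -x := by
      have h1 : (x ::ₘ rest).sum = 0 := by rw [hcons]; exact hsum
      rw [Multiset.sum_cons] at h1
      exact eq_neg_of_add_eq_zero_right h1
    have hinner : ((rest.map (fun y => (inner ℝ x y : ℝ))).sum) < 0 := by
      have h2 : ((innerSL ℝ x : V →L[ℝ] ℝ) rest.sum)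
          = ((rest.map (innerSL ℝ x : V →L[ℝ] ℝ)).sum) := map_multiset_sum _ _
      have h3 : (inner ℝ x rest.sum : ℝ) = -(inner ℝ x x : ℝ) := by
        rw [hrsum, inner_neg_right]
      have hxx : (0:ℝ) < inner ℝ x x := by
        rw [real_inner_self_eq_norm_mul_norm]
        exact mul_pos (norm_pos_iff.mpr hx0) (norm_pos_iff.mpr hx0)
      have h4 : ((rest.map (fun y => (inner ℝ x y : ℝ))).sum) = (inner ℝ x rest.sum : ℝ) := by
        have hfun : (fun y => (inner ℝ x y : ℝ)) = ⇑((innerSL ℝ) x) := by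
          funext y; simp
        rw [hfun, ← h2]
        rfl
      rw [h4, h3]
      linarith
    have hex : ∃ y ∈ rest, (inner ℝ x y : ℝ) < 0 := by
      by_contra hc
      push_neg at hc
      have : (0:ℝ) ≤ (rest.map (fun y => (inner ℝ x y : ℝ))).sum := by
        apply Multiset.sum_nonneg
        intro a ha
        obtain ⟨y, hy, rfl⟩ := Multiset.mem_map.mp ha
        exact hc y hy
      linarith
    obtain ⟨y, hy, hxy⟩ := hex
    have hyp : y ∈ Φpos := hmem y (Multiset.mem_of_mem_erase hy)
    have hxy0 : x + y ≠ 0 := by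
      intro h
      exact hpos.2.2.1 x hxp ((eq_neg_of_add_eq_zero_right h) ▸ hyp)
    have hxyΦ : x + y ∈ Φ := aux_sum_mem hΦ hxΦ (hpos.1 hyp) hxy hxy0
    have hxyp : x + y ∈ Φpos := hpos.2.2.2 x hxp y hyp hxyΦ
    set t := (x + y) ::ₘ (rest.erase y) with ht
    have hycard : 0 < Multiset.card rest := Multiset.card_pos_iff_exists_mem.mpr ⟨y, hy⟩
    have hcr : Multiset.card rest = Multiset.card s - 1 := by
      rw [hrest, Multiset.card_erase_of_mem hx]; rfl
    have hcre : Multiset.card (rest.erase y) = Multiset.card rest - 1 := by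
      rw [Multiset.card_erase_of_mem hy]; rfl
    have hcardt : Multiset.card t ≤ N := by
      rw [ht, Multiset.card_cons]
      have hs1 : 0 < Multiset.card s := Multiset.card_pos_iff_exists_mem.mpr ⟨x, hx⟩
      omega
    have hmemt : ∀ z ∈ t, z ∈ Φpos := by
      intro z hz
      rcases Multiset.mem_cons.mp hz with h | h
      · rw [h]; exact hxyp
      · exact hmem z (Multiset.mem_of_mem_erase (Multiset.mem_of_mem_erase h))
    have hsumt : t.sum = 0 := by
      have hyc : y ::ₘ rest.erase y = rest := Multiset.cons_erase hy
      have : rest.sum = y + (rest.erase y).sum := by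
        rw [← Multiset.sum_cons, hyc]
      rw [ht, Multiset.sum_cons]
      rw [this] at hrsum
      rw [add_assoc, hrsum]
      exact add_neg_cancel x
    exact ih t hcardt hmemt (Multiset.cons_ne_zero) hsumt

/-- A nonempty saturated subset of `Φ⁺` contains at least one simple root. -/
theorem saturated_contains_simple {V : Type*} [NormedAddCommGroup V]
    [InnerProductSpace ℝ V] (Φ Φpos : Finset V)
    (hΦ : IsRootSystem Φ) (hpos : IsPositiveSystem Φ Φpos)
    (A : Finset V) (hA : A ⊆ Φpos) (hsat : Saturated Φ Φpos A) (hne : A.Nonempty) :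
    ∃ α ∈ A, IsSimpleRoot Φpos α := by
  by_contra hcon
  push_neg at hcon
  -- every element of A decomposes with one summand in A
  have key : ∀ p : {x : V // x ∈ A}, ∃ q : {x : V // x ∈ A}, ∃ c : V,
      c ∈ Φpos ∧ (p : V) = (q : V) + c := by
    rintro ⟨a, ha⟩
    have hnotsimple := hcon a ha
    rw [IsSimpleRoot] at hnotsimple
    have hap : a ∈ Φpos := hA ha
    have : ∃ β ∈ Φpos, ∃ γ ∈ Φpos, a = β + γ := by
      by_contra h
      exact hnotsimple ⟨hap, h⟩
    obtain ⟨β, hβ, γ, hγ, habg⟩ := this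
    have haΦ : a ∈ Φ := hpos.1 hap
    have hmem : β ∈ A ∨ γ ∈ A := by
      by_contra h
      push_neg at h
      exact (hsat.2 β hβ γ hγ h.1 h.2 (habg ▸ haΦ)) (habg ▸ ha)
    rcases hmem with h | h
    · exact ⟨⟨β, h⟩, γ, hγ, habg⟩
    · exact ⟨⟨γ, h⟩, β, hβ, by show a = γ + β; rw [habg, add_comm]⟩
  choose nxt c hc hsum using key
  set F : ℕ → {x : V // x ∈ A} := fun n => nxt^[n] ⟨hne.choose, hne.choose_spec⟩ with hF
  have hstep : ∀ n, (F n : V) = (F (n+1) : V) + c (F n) := by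
    intro n
    have : F (n+1) = nxt (F n) := Function.iterate_succ_apply' _ _ _
    rw [this]
    exact hsum (F n)
  -- telescoping
  have htel : ∀ m n, (F n : V) = (F (n+m) : V) + ∑ k ∈ Finset.range m, c (F (n+k)) := by
    intro m
    induction m with
    | zero => intro n; simp
    | succ m ihm =>
      intro n
      have h1 := hstep n
      have h2 := ihm (n+1)
      rw [Finset.sum_range_succ'] at *
      rw [h1, h2]
      have : ∀ k, n + 1 + k = n + (k+1) := by intro k; ring
      rw [Finset.sum_congr rfl (fun k _ => by rw [this k])]
      have he : n + 1 + m = n + (m + 1) := by ring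
      rw [he]
      abel
  -- pigeonhole
  obtain ⟨i, j, hij, heq⟩ := Finite.exists_ne_map_eq_of_infinite F
  wlog hlt : i < j generalizing i j
  · exact this j i hij.symm heq.symm (by omega)
  have hij0 : 0 < j - i := by omega
  have hji : i + (j - i) = j := by omega
  have := htel (j - i) i
  rw [hji, ← heq] at this
  have hzero : (∑ k ∈ Finset.range (j - i), c (F (i+k))) = 0 := by
    have h := this.symm
    rwa [add_eq_left] at h
  -- contradiction with aux_sum_ne_zero
  have := aux_sum_ne_zero hΦ hpos (j - i)
    ((Finset.range (j - i)).val.map (fun k => c (F (i+k))))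
    (by simp)
    (by
      intro z hz
      obtain ⟨k, -, rfl⟩ := Multiset.mem_map.mp hz
      exact hc _)
    (by
      simp only [ne_eq, Multiset.map_eq_zero]
      intro h
      have : Multiset.card (Finset.range (j - i)).val = 0 := by rw [h]; rfl
      simp at this
      omega)
  exact this hzero
end

section
/- If A ⊆ Φ⁺ is saturated, α ∈ A is a simple root, and A' = s_α(A \ {α}) where s_α is the simple reflection, then A' ⊆ Φ⁺ and A' is saturated. -/
open scoped RealInnerProductSpace


open Finset

/-- The reflection in the root `α`. -/
noncomputable def rootReflection {V : Type*} [NormedAddCommGroup V]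
    [InnerProductSpace ℝ V] (α : V) : V → V :=
  fun x => x - ((2 * inner ℝ x α / inner ℝ α α : ℝ)) • α

section Helpers
variable {V : Type*} [NormedAddCommGroup V] [InnerProductSpace ℝ V] {Φ : Finset V}

lemma strictCS {α β : V} (hα : α ≠ 0) (hβ : β ≠ 0) (h : ∀ r : ℝ, β ≠ r • α) :
    ⟪β, α⟫ * ⟪β, α⟫ < ⟪α, α⟫ * ⟪β, β⟫ := by
  have h1 : |⟪α, β⟫ / (‖α‖ * ‖β‖)| ≤ 1 := abs_real_inner_div_norm_mul_norm_le_one α β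
  have h2 : |⟪α, β⟫ / (‖α‖ * ‖β‖)| ≠ 1 := by
    intro heq
    rw [abs_real_inner_div_norm_mul_norm_eq_one_iff] at heq
    obtain ⟨-, r, hr, hr'⟩ := heq
    exact h r hr'
  have hn : (0:ℝ) < ‖α‖ * ‖β‖ := by
    have := norm_pos_iff.2 hα
    have := norm_pos_iff.2 hβ
    positivity
  have h3 : |⟪α, β⟫ / (‖α‖ * ‖β‖)| < 1 := lt_of_le_of_ne h1 h2
  rw [abs_div, abs_of_pos hn, div_lt_one hn] at h3
  have h4 : |⟪α, β⟫| * |⟪α, β⟫| < (‖α‖ * ‖β‖) * (‖α‖ * ‖β‖) := by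
    have := abs_nonneg ⟪α, β⟫
    nlinarith
  rw [real_inner_comm α β]
  calc ⟪α, β⟫ * ⟪α, β⟫ = |⟪α, β⟫| * |⟪α, β⟫| := (abs_mul_abs_self _).symm
    _ < (‖α‖ * ‖β‖) * (‖α‖ * ‖β‖) := h4
    _ = ⟪α, α⟫ * ⟪β, β⟫ := by
        rw [real_inner_self_eq_norm_mul_norm, real_inner_self_eq_norm_mul_norm]; ring

lemma refl_add (α x y : V) :
    rootReflection α (x + y) = rootReflection α x + rootReflection α y := by
  unfold rootReflection
  rw [inner_add_left]
  have : (2 * (⟪x, α⟫ + ⟪y, α⟫) / ⟪α, α⟫) = 2*⟪x, α⟫/⟪α, α⟫ + 2*⟪y, α⟫/⟪α, α⟫ := by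
    ring
  rw [this, add_smul]
  abel

lemma refl_invol {α : V} (hα : α ≠ 0) (x : V) :
    rootReflection α (rootReflection α x) = x := by
  have ha : ⟪α, α⟫ ≠ 0 := inner_self_ne_zero.2 hα
  unfold rootReflection
  rw [inner_sub_left, real_inner_smul_left]
  have : (2 * (⟪x, α⟫ - 2 * ⟪x, α⟫ / ⟪α, α⟫ * ⟪α, α⟫) / ⟪α, α⟫)
      = -(2*⟪x, α⟫/⟪α, α⟫) := by field_simp; ring
  rw [this]
  module

lemma refl_self {α : V} (hα : α ≠ 0) : rootReflection α α = -α := by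
  have ha : ⟪α, α⟫ ≠ 0 := inner_self_ne_zero.2 hα
  unfold rootReflection
  rw [mul_div_assoc, div_self ha, mul_one]
  module

lemma RS.ne_zero (hΦ : IsRootSystem Φ) {β : V} (hβ : β ∈ Φ) : β ≠ 0 := by
  rintro rfl; exact hΦ.1 hβ

lemma RS.inner_pos (hΦ : IsRootSystem Φ) {β : V} (hβ : β ∈ Φ) : 0 < ⟪β, β⟫ := 
by
  have h0 : β ≠ 0 := RS.ne_zero hΦ hβ
  rw [real_inner_self_eq_norm_mul_norm]
  have := norm_pos_iff.2 h0
  positivity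

lemma RS.refl_mem (hΦ : IsRootSystem Φ) {α β : V} (hα : α ∈ Φ) (hβ : β ∈ Φ) :
    rootReflection α β ∈ Φ := hΦ.2.2.1 α hα β hβ

lemma RS.neg_mem (hΦ : IsRootSystem Φ) {β : V} (hβ : β ∈ Φ) : -β ∈ Φ := by
  have h := RS.refl_mem hΦ hβ hβ
  rwa [refl_self (RS.ne_zero hΦ hβ)] at h

lemma RS.not_mul (hΦ : IsRootSystem Φ) {α β : V} (hα : α ∈ Φ) (hβ : β ∈ Φ)
    (h1 : β ≠ α) (h2 : β ≠ -α) : ∀ r : ℝ, β ≠ r • α := by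
  intro r hr
  rcases hΦ.2.2.2.2 α hα r (hr ▸ hβ) with h | h
  · exact h1 (by rw [hr, h, one_smul])
  · exact h2 (by rw [hr, h]; module)

/-- Key lemma: if `α, β` are non-proportional roots with `⟪β, α⟫ > 0` then `β - α` is a root. -/
lemma RS.sub_root (hΦ : IsRootSystem Φ) {α β : V} (hα : α ∈ Φ) (hβ : β ∈ Φ)
    (h1 : β ≠ α) (h2 : β ≠ -α) (hip : 0 < ⟪β, α⟫) : β - α ∈ Φ := by
  have ha : (0:ℝ) < ⟪α, α⟫ := RS.inner_pos hΦ hα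
  have hb : (0:ℝ) < ⟪β, β⟫ := RS.inner_pos hΦ hβ
  obtain ⟨n, hn⟩ := hΦ.2.2.2.1 α hα β hβ
  obtain ⟨m, hm⟩ := hΦ.2.2.2.1 β hβ α hα
  rw [real_inner_comm β α] at hm
  have hn1 : 1 ≤ n := by
    have : (0:ℝ) < (n:ℝ) := by rw [← hn]; positivity
    exact_mod_cast this
  have hm1 : 1 ≤ m := by
    have : (0:ℝ) < (m:ℝ) := by rw [← hm]; positivity
    exact_mod_cast this
  have hcs : ⟪β, α⟫ * ⟪β, α⟫ < ⟪α, α⟫ * ⟪β, β⟫ :=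
    strictCS (RS.ne_zero hΦ hα) (RS.ne_zero hΦ hβ) (RS.not_mul hΦ hα hβ h1 h2)
  have hprod : (n:ℝ) * (m:ℝ) < 4 := by
    rw [← hn, ← hm]
    rw [div_mul_div_comm]
    rw [div_lt_iff₀ (by positivity)]
    nlinarith
  have hprod' : n * m ≤ 3 := by
    have : (n * m : ℤ) < 4 := by exact_mod_cast hprod
    omega
  rcases eq_or_lt_of_le hn1 with h | h
  · -- n = 1
    have := RS.refl_mem hΦ hα hβ
    unfold rootReflection at this
    rw [hn, ← h] at this
    simpa using this
  · -- n ≥ 2, so m = 1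
    have hm' : m = 1 := by nlinarith
    have := RS.refl_mem hΦ hβ hα
    unfold rootReflection at this
    rw [real_inner_comm β α, hm, hm'] at this
    simp only [Int.cast_one, one_smul] at this
    have := RS.neg_mem hΦ this
    rwa [neg_sub] at this

end Helpers

section Perm
variable {V : Type*} [NormedAddCommGroup V] [InnerProductSpace ℝ V] {Φ Φpos : Finset V}

/-- If `x` is positive and `x - α` is a root, then `x - α` is positive (`α` simple). -/
lemma sub_alpha_pos (hpos : IsPositiveSystem Φ Φpos) {α : V}
    (hsimple : IsSimpleRoot Φpos α) {x : V} (hx : x ∈ Φpos) (hxa : x - α ∈ Φ) :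
    x - α ∈ Φpos := by
  rcases hpos.2.1 _ hxa with h | h
  · exact h
  · exact absurd (⟨-(x - α), h, x, hx, by abel⟩ : ∃ β ∈ Φpos, ∃ γ ∈ Φpos, α = β + γ)
      hsimple.2

/-- If `x` is positive and `x + α` is a root, then `x + α` is positive (`α` simple). -/
lemma add_alpha_pos (hΦ : IsRootSystem Φ) (hpos : IsPositiveSystem Φ Φpos) {α : V}
    (hsimple : IsSimpleRoot Φpos α) {x : V} (hx : x ∈ Φpos) (hxa : x + α ∈ Φ) :
    x + α ∈ Φpos := by
  rcases hpos.2.1 _ hxa with h | h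
  · exact h
  · exfalso
    have hαΦ : α ∈ Φ := hpos.1 hsimple.1
    have hsum : -(x + α) + x ∈ Φ := by
      have : -(x + α) + x = -α := by abel
      rw [this]; exact RS.neg_mem hΦ hαΦ
    have := hpos.2.2.2 _ h _ hx hsum
    rw [show -(x + α) + x = -α by abel] at this
    exact hpos.2.2.1 α hsimple.1 this

lemma refl_pos_mem (hΦ : IsRootSystem Φ) (hpos : IsPositiveSystem Φ Φpos)
    {α : V} (hsimple : IsSimpleRoot Φpos α) :
    ∀ β ∈ Φpos, β ≠ α → rootReflection α β ∈ Φpos := by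
  intro β hβp hβα
  have hαp : α ∈ Φpos := hsimple.1
  have hαΦ : α ∈ Φ := hpos.1 hαp
  have hβΦ : β ∈ Φ := hpos.1 hβp
  have hα0 : α ≠ 0 := RS.ne_zero hΦ hαΦ
  have hβ0 : β ≠ 0 := RS.ne_zero hΦ hβΦ
  have ha : (0:ℝ) < ⟪α, α⟫ := RS.inner_pos hΦ hαΦ
  have hβnα : β ≠ -α := by
    rintro rfl
    exact hpos.2.2.1 α hαp hβp
  obtain ⟨n, hn⟩ := hΦ.2.2.2.1 α hαΦ β hβΦ
  obtain ⟨m, hm⟩ := hΦ.2.2.2.1 β hβΦ α hαΦ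
  rw [real_inner_comm β α] at hm
  have hb : (0:ℝ) < ⟪β, β⟫ := RS.inner_pos hΦ hβΦ
  have hip : ⟪β, α⟫ = (n:ℝ) * ⟪α, α⟫ / 2 := by
    field_simp at hn; linarith
  have him : ⟪β, α⟫ = (m:ℝ) * ⟪β, β⟫ / 2 := by
    field_simp at hm; linarith
  -- bound |n| ≤ 3
  have hcs : ⟪β, α⟫ * ⟪β, α⟫ < ⟪α, α⟫ * ⟪β, β⟫ :=
    strictCS hα0 hβ0 (RS.not_mul hΦ hαΦ hβΦ hβα hβnα)
  have hprodR : (n:ℝ) * (m:ℝ) < 4 := by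
    rw [← hn, ← hm, div_mul_div_comm, div_lt_iff₀ (by positivity)]
    nlinarith
  have hprod0 : (0:ℝ) ≤ (n:ℝ) * (m:ℝ) := by
    rw [← hn, ← hm, div_mul_div_comm]
    apply div_nonneg
    · nlinarith [mul_self_nonneg ⟪β, α⟫]
    · positivity
  have hnm3 : n * m ≤ 3 := by
    have : (n * m : ℤ) < 4 := by exact_mod_cast hprodR
    omega
  have hnm0 : 0 ≤ n * m := by exact_mod_cast hprod0
  have hmn0 : m = 0 → n = 0 := by
    intro h
    have h0 : ⟪β, α⟫ = 0 := by rw [him, h]; simp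
    have h1 : (n:ℝ) * ⟪α, α⟫ / 2 = 0 := by rw [← hip]; exact h0
    have : (n:ℝ) = 0 := by
      rcases mul_eq_zero.1 (by linarith : (n:ℝ) * ⟪α, α⟫ = 0) with h' | h'
      · exact h'
      · linarith
    exact_mod_cast this
  have hbound : -3 ≤ n ∧ n ≤ 3 := by
    rcases eq_or_ne m 0 with h | h
    · rw [hmn0 h]; omega
    · have h1 : 1 ≤ |m| := Int.one_le_abs (by omega)
      have h2 : |n| * |m| ≤ 3 := by rw [← abs_mul, abs_of_nonneg hnm0]; exact hnm3
      have h3 : |n| ≤ |n| * |m| := le_mul_of_one_le_right (abs_nonneg n) h1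
      have : |n| ≤ 3 := le_trans h3 h2
      rw [abs_le] at this
      omega
  obtain ⟨hbd1, hbd2⟩ := hbound
  have hδΦ : β - (n:ℝ) • α ∈ Φ := by
    have := RS.refl_mem hΦ hαΦ hβΦ
    unfold rootReflection at this
    rwa [hn] at this
  have hrw : rootReflection α β = β - (n:ℝ) • α := by
    unfold rootReflection; rw [hn]
  rw [hrw]
  clear hrw hn hm hprodR hprod0 hnm3 hnm0 hmn0 hcs him
  -- helper for β + α ∈ Φ when n ≤ -2
  interval_cases n <;> push_cast at hip hδΦ ⊢
  · -- n = -3 : reflection is β + 3α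
    have e1 : β + α ∈ Φ := by
      have hnb : -β ∈ Φ := RS.neg_mem hΦ hβΦ
      have h := RS.sub_root hΦ hαΦ hnb
        (by intro h; apply hβnα; rw [← h, neg_neg])
        (by intro h; exact hβα (neg_inj.mp h))
        (by rw [inner_neg_left]; nlinarith)
      have h2 := RS.neg_mem hΦ h
      rwa [show -(-β - α) = β + α by abel] at h2
    have e2 : β + α + α ∈ Φ := by
      have hnba : -(β + α) ∈ Φ := RS.neg_mem hΦ e1
      have h := RS.sub_root hΦ hαΦ hnba
        (by
          intro h
          have h3 : β + α = -α := neg_eq_iff_eq_neg.mp h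
          have h4 : β = -α - α := by rw [← h3]; abel
          exact RS.not_mul hΦ hαΦ hβΦ hβα hβnα (-2) (by rw [h4]; module))
        (by
          intro h
          have h3 : β + α = α := neg_inj.mp h
          exact hβ0 (by have := h3; rwa [add_eq_right] at this))
        (by rw [inner_neg_left, inner_add_left]; nlinarith)
      have h2 := RS.neg_mem hΦ h
      rwa [show -(-(β + α) - α) = β + α + α by abel] at h2
    have e3 : β + α + α + α ∈ Φ := by
      rwa [show β - (-3:ℝ) • α = β + α + α + α by module] at hδΦ
    have p1 := add_alpha_pos hΦ hpos hsimple hβp e1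
    have p2 := add_alpha_pos hΦ hpos hsimple p1 e2
    have p3 := add_alpha_pos hΦ hpos hsimple p2 e3
    rwa [show β - (-3:ℝ) • α = β + α + α + α by module]
  · -- n = -2 : reflection is β + 2α
    have e1 : β + α ∈ Φ := by
      have hnb : -β ∈ Φ := RS.neg_mem hΦ hβΦ
      have h := RS.sub_root hΦ hαΦ hnb
        (by intro h; apply hβnα; rw [← h, neg_neg])
        (by intro h; exact hβα (neg_inj.mp h))
        (by rw [inner_neg_left]; nlinarith)
      have h2 := RS.neg_mem hΦ h
      rwa [show -(-β - α) = β + α by abel] at h2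
    have e2 : β + α + α ∈ Φ := by
      rwa [show β - (-2:ℝ) • α = β + α + α by module] at hδΦ
    have p1 := add_alpha_pos hΦ hpos hsimple hβp e1
    have p2 := add_alpha_pos hΦ hpos hsimple p1 e2
    rwa [show β - (-2:ℝ) • α = β + α + α by module]
  · -- n = -1 : reflection is β + α
    have e1 : β + α ∈ Φ := by
      rwa [show β - (-1:ℝ) • α = β + α by module] at hδΦ
    have p1 := add_alpha_pos hΦ hpos hsimple hβp e1
    rwa [show β - (-1:ℝ) • α = β + α by module]
  · -- n = 0
    simpa using hβp
  · -- n = 1 : reflection is β - α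
    have e1 : β - α ∈ Φ := by
      rwa [show β - (1:ℝ) • α = β - α by module] at hδΦ
    have p1 := sub_alpha_pos hpos hsimple hβp e1
    rwa [show β - (1:ℝ) • α = β - α by module]
  · -- n = 2
    have e1 : β - α ∈ Φ := RS.sub_root hΦ hαΦ hβΦ hβα hβnα (by nlinarith)
    have e2 : β - α - α ∈ Φ := by
      rwa [show β - (2:ℝ) • α = β - α - α by module] at hδΦ
    have p1 := sub_alpha_pos hpos hsimple hβp e1
    have p2 := sub_alpha_pos hpos hsimple p1 e2
    rwa [show β - (2:ℝ) • α = β - α - α by module]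
  · -- n = 3
    have e1 : β - α ∈ Φ := RS.sub_root hΦ hαΦ hβΦ hβα hβnα (by nlinarith)
    have e2 : β - α - α ∈ Φ := RS.sub_root hΦ hαΦ e1
      (by
        intro h
        have h3 : β = α + α := eq_add_of_sub_eq h
        exact RS.not_mul hΦ hαΦ hβΦ hβα hβnα 2 (by rw [h3]; module))
      (by
        intro h
        have h3 : β = -α + α := eq_add_of_sub_eq h
        simp at h3
        exact hβ0 h3)
      (by rw [inner_sub_left]; nlinarith)
    have e3 : β - α - α - α ∈ Φ := by
      rwa [show β - (3:ℝ) • α = β - α - α - α by module] at hδΦ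
    have p1 := sub_alpha_pos hpos hsimple hβp e1
    have p2 := sub_alpha_pos hpos hsimple p1 e2
    have p3 := sub_alpha_pos hpos hsimple p2 e3
    rwa [show β - (3:ℝ) • α = β - α - α - α by module]

end Perm

/-- If `A ⊆ Φ⁺` is saturated, `α ∈ A` is a simple root, and `A' = s_α(A \ {α})`, then
`A' ⊆ Φ⁺` and `A'` is saturated. -/
theorem saturated_reflection {V : Type*} [NormedAddCommGroup V]
    [InnerProductSpace ℝ V] [DecidableEq V] (Φ Φpos : Finset V)
    (hΦ : IsRootSystem Φ) (hpos : IsPositiveSystem Φ Φpos)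
    (A : Finset V) (hA : A ⊆ Φpos) (hsat : Saturated Φ Φpos A)
    (α : V) (hα : α ∈ A) (hsimple : IsSimpleRoot Φpos α) :
    (A.erase α).image (rootReflection α) ⊆ Φpos ∧
    Saturated Φ Φpos ((A.erase α).image (rootReflection α)) := by
  have hαp : α ∈ Φpos := hA hα
  have hαΦ : α ∈ Φ := hpos.1 hαp
  have hα0 : α ≠ 0 := RS.ne_zero hΦ hαΦ
  have hP : ∀ β ∈ Φpos, β ≠ α → rootReflection α β ∈ Φpos :=
    refl_pos_mem hΦ hpos hsimple
  -- preimage fact: if x ∈ Φpos, x ≠ α, and s_α x ∈ A then x ∈ A'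
  have hpre : ∀ x ∈ Φpos, x ≠ α → rootReflection α x ∈ A →
      x ∈ (A.erase α).image (rootReflection α) := by
    intro x hx hxα hxA
    have hxne : rootReflection α x ≠ α := by
      intro h
      have : rootReflection α (rootReflection α x) = rootReflection α α := by rw [h]
      rw [refl_invol hα0, refl_self hα0] at this
      rw [this] at hx
      exact hpos.2.2.1 α hαp hx
    exact Finset.mem_image.2 ⟨rootReflection α x, Finset.mem_erase.2 ⟨hxne, hxA⟩,
      refl_invol hα0 x⟩
  have hsubset : (A.erase α).image (rootReflection α) ⊆ Φpos := by
    intro x hx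
    obtain ⟨β, hβ, rfl⟩ := Finset.mem_image.1 hx
    exact hP β (hA (Finset.mem_of_mem_erase hβ)) (Finset.ne_of_mem_erase hβ)
  refine ⟨hsubset, ?_, ?_⟩
  · -- closure under root sums
    intro x hx y hy hxy
    obtain ⟨β, hβ, rfl⟩ := Finset.mem_image.1 hx
    obtain ⟨γ, hγ, rfl⟩ := Finset.mem_image.1 hy
    have hβA : β ∈ A := Finset.mem_of_mem_erase hβ
    have hγA : γ ∈ A := Finset.mem_of_mem_erase hγ
    have hsum : rootReflection α β + rootReflection α γ = rootReflection α (β + γ) :=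
      (refl_add α β γ).symm
    rw [hsum] at hxy ⊢
    have hβγ : β + γ ∈ Φ := by
      have := RS.refl_mem hΦ hαΦ hxy
      rwa [refl_invol hα0] at this
    have hβγA : β + γ ∈ A := hsat.1 β hβA γ hγA hβγ
    have hne : β + γ ≠ α := by
      intro h
      exact hsimple.2 ⟨β, hA hβA, γ, hA hγA, h.symm⟩
    exact Finset.mem_image.2 ⟨β + γ, Finset.mem_erase.2 ⟨hne, hβγA⟩, rfl⟩
  · -- saturation complement condition
    intro γ hγ δ hδ hγA' hδA' hγδ hmem
    obtain ⟨ε, hε, hεeq⟩ := Finset.mem_image.1 hmem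
    have hεA : ε ∈ A := Finset.mem_of_mem_erase hε
    have hεΦ : ε ∈ Φ := hpos.1 (hA hεA)
    -- ε = s_α (γ + δ)
    have hεval : ε = rootReflection α (γ + δ) := by
      rw [← hεeq, refl_invol hα0]
    by_cases hγα : γ = α
    · by_cases hδα : δ = α
      · -- γ = δ = α : γ + δ = 2α cannot be a root
        have h2 : (2:ℝ) • α ∈ Φ := by
          rw [show (2:ℝ) • α = γ + δ from by rw [hγα, hδα]; module]
          exact hγδ
        rcases hΦ.2.2.2.2 α hαΦ 2 h2 with h | h <;> norm_num at h
      · -- γ = α, δ ≠ α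
        set d := rootReflection α δ with hd
        have hdp : d ∈ Φpos := hP δ hδ hδα
        have hdA : d ∉ A := by
          intro hdA
          have hdα : δ ≠ α := hδα
          exact hδA' (hpre δ hδ hδα hdA)
        have hεd : ε = -α + d := by
          rw [hεval, hγα, refl_add, refl_self hα0]
        have hsum : ε + α ∈ Φ := by
          rw [show ε + α = d from by rw [hεd]; abel]
          exact hpos.1 hdp
        have := hsat.1 ε hεA α hα hsum
        rw [show ε + α = d from by rw [hεd]; abel] at this
        exact hdA this
    · by_cases hδα : δ = α
      · -- δ = α, γ ≠ α
        set g := rootReflection α γ with hg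
        have hgp : g ∈ Φpos := hP γ hγ hγα
        have hgA : g ∉ A := by
          intro hgA
          exact hγA' (hpre γ hγ hγα hgA)
        have hεg : ε = g + -α := by
          rw [hεval, hδα, refl_add, refl_self hα0]
        have hsum : ε + α ∈ Φ := by
          rw [show ε + α = g from by rw [hεg]; abel]
          exact hpos.1 hgp
        have := hsat.1 ε hεA α hα hsum
        rw [show ε + α = g from by rw [hεg]; abel] at this
        exact hgA this
      · -- γ ≠ α and δ ≠ α
        set g := rootReflection α γ with hg
        set d := rootReflection α δ with hd
        have hgp : g ∈ Φpos := hP γ hγ hγα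
        have hdp : d ∈ Φpos := hP δ hδ hδα
        have hgA : g ∉ A := fun hgA => hγA' (hpre γ hγ hγα hgA)
        have hdA : d ∉ A := fun hdA => hδA' (hpre δ hδ hδα hdA)
        have hεgd : ε = g + d := by rw [hεval, refl_add]
        have hsum : g + d ∈ Φ := hεgd ▸ hεΦ
        exact hsat.2 g hgp d hdp hgA hdA hsum (hεgd ▸ hεA)
end

section
/- Let λ be a partition of C(n,2) with at most n parts, λ ≠ (n−1, n−2, …, 1, 0), and λ ⪯ (n−1,…,1,0) in dominance order. Then N_λ, the number of tournament matrices of size n with sorted row-sum vector λ, is even. -/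
open Finset

/-- A tournament matrix: 0/1 entries (here booleans), zero diagonal, and
`a i j + a j i = 1` for `i ≠ j`. -/
def IsTournament {n : ℕ} (a : Matrix (Fin n) (Fin n) Bool) : Prop :=
  (∀ i, a i i = false) ∧ ∀ i j, i ≠ j → a i j = !a j i

/-- The `i`-th row sum of a boolean matrix. -/
def rowSum {n : ℕ} (a : Matrix (Fin n) (Fin n) Bool) (i : Fin n) : ℕ :=
  (Finset.univ.filter fun j => a i j = true).card

/-- The multiset of row sums of `a` coincides with the multiset of parts of `lam`
(i.e. the sorted row sums of `a` are the partition `lam`). -/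
def sortedRowSumsEq {n : ℕ} (a : Matrix (Fin n) (Fin n) Bool) (lam : Fin n → ℕ) : Prop :=
  Multiset.map (rowSum a) Finset.univ.val = Multiset.map lam Finset.univ.val

/-- `N_λ`: the number of tournament matrices of size `n` whose sorted row sums are `lam`. -/
noncomputable def Nlam (n : ℕ) (lam : Fin n → ℕ) : ℕ :=
  {a : Matrix (Fin n) (Fin n) Bool | IsTournament a ∧ sortedRowSumsEq a lam}.ncard

/-- Partial sum `f 0 + ... + f i`. -/
def partialSum {n : ℕ} (f : Fin n → ℕ) (i : Fin n) : ℕ :=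
  ∑ k ∈ Finset.univ.filter (fun k => k ≤ i), f k

/-- The staircase partition `(n-1, n-2, ..., 1, 0)`. -/
def stair (n : ℕ) : Fin n → ℕ := fun i => n - 1 - i.val

/-! ### Auxiliary material -/

/-- The condition that a matrix has two distinct rows with equal row sums. -/
def hasRep {n : ℕ} (a : Matrix (Fin n) (Fin n) Bool) : Prop :=
  ∃ p : Fin n × Fin n, p.1 ≠ p.2 ∧ rowSum a p.1 = rowSum a p.2

/-- Choose a pair of distinct indices with equal values of `s`, if one exists. -/
noncomputable def pickPair {n : ℕ} (s : Fin n → ℕ) : Option (Fin n × Fin n) :=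
  @dite _ (∃ p : Fin n × Fin n, p.1 ≠ p.2 ∧ s p.1 = s p.2) (Classical.dec _)
    (fun h => some h.choose) (fun _ => none)

lemma pickPair_some {n : ℕ} {s : Fin n → ℕ}
    (h : ∃ p : Fin n × Fin n, p.1 ≠ p.2 ∧ s p.1 = s p.2) :
    ∃ p, pickPair s = some p ∧ p.1 ≠ p.2 ∧ s p.1 = s p.2 :=
  ⟨h.choose, by unfold pickPair; rw [dif_pos h], h.choose_spec⟩

/-- Conjugating a matrix by the swap of two equal-score rows; identity otherwise. -/
noncomputable def flipMat {n : ℕ} (a : Matrix (Fin n) (Fin n) Bool) :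
    Matrix (Fin n) (Fin n) Bool :=
  match pickPair (rowSum a) with
  | some p => fun x y => a (Equiv.swap p.1 p.2 x) (Equiv.swap p.1 p.2 y)
  | none => a

lemma rowSum_conj {n : ℕ} (a : Matrix (Fin n) (Fin n) Bool) (σ : Equiv.Perm (Fin n))
    (x : Fin n) : rowSum (fun x y => a (σ x) (σ y)) x = rowSum a (σ x) := by
  unfold rowSum
  apply Finset.card_bij (fun j _ => σ j)
  · intro j hj
    simp only [Finset.mem_filter, Finset.mem_univ, true_and] at hj ⊢
    exact hj
  · intro j₁ _ j₂ _ h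
    exact σ.injective h
  · intro j hj
    simp only [Finset.mem_filter, Finset.mem_univ, true_and] at hj ⊢
    exact ⟨σ.symm j, by simpa using hj, by simp⟩

lemma rowSum_flipMat {n : ℕ} {a : Matrix (Fin n) (Fin n) Bool} (h : hasRep a) :
    rowSum (flipMat a) = rowSum a := by
  obtain ⟨p, hp, hne, heq⟩ := pickPair_some h
  funext x
  unfold flipMat
  rw [hp]
  rw [rowSum_conj a (Equiv.swap p.1 p.2) x]
  rcases eq_or_ne x p.1 with rfl | h1
  · rw [Equiv.swap_apply_left]; exact heq.symm
  rcases eq_or_ne x p.2 with rfl | h2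
  · rw [Equiv.swap_apply_right]; exact heq
  · rw [Equiv.swap_apply_of_ne_of_ne h1 h2]

lemma flipMat_tournament {n : ℕ} {a : Matrix (Fin n) (Fin n) Bool} (ht : IsTournament a) :
    IsTournament (flipMat a) := by
  unfold flipMat
  rcases hpk : pickPair (rowSum a) with _ | p
  · exact ht
  · exact ⟨fun i => ht.1 _, fun i j hij => ht.2 _ _ (fun hc => hij (Equiv.injective _ hc))⟩

lemma flipMat_ne {n : ℕ} {a : Matrix (Fin n) (Fin n) Bool} (h : hasRep a)
    (ht : IsTournament a) : flipMat a ≠ a := by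
  intro hcontra
  obtain ⟨p, hp, hne, heq⟩ := pickPair_some h
  have h1 : flipMat a p.1 p.2 = a p.1 p.2 := by rw [hcontra]
  unfold flipMat at h1
  rw [hp] at h1
  simp only [Equiv.swap_apply_left, Equiv.swap_apply_right] at h1
  have h2 := ht.2 _ _ hne
  rw [h2] at h1
  exact (Bool.not_ne_self _ h1.symm).elim

lemma flipMat_flipMat {n : ℕ} {a : Matrix (Fin n) (Fin n) Bool} (h : hasRep a) :
    flipMat (flipMat a) = a := by
  have hr : rowSum (flipMat a) = rowSum a := rowSum_flipMat h
  obtain ⟨p, hp, hne, heq⟩ := pickPair_some h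
  have hp2 : pickPair (rowSum (flipMat a)) = some p := by rw [hr]; exact hp
  funext x y
  conv_lhs => rw [flipMat]
  rw [hp2]
  show flipMat a (Equiv.swap p.1 p.2 x) (Equiv.swap p.1 p.2 y) = a x y
  unfold flipMat
  rw [hp]
  show a (Equiv.swap p.1 p.2 (Equiv.swap p.1 p.2 x))
      (Equiv.swap p.1 p.2 (Equiv.swap p.1 p.2 y)) = a x y
  rw [Equiv.swap_apply_self, Equiv.swap_apply_self]

/-- Fixed-point-free involutions on a finset give even cardinality. -/
lemma even_card_of_invol {α : Type*} [DecidableEq α] (f : α → α) :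
    ∀ s : Finset α, (∀ x ∈ s, f x ∈ s) → (∀ x ∈ s, f (f x) = x) →
      (∀ x ∈ s, f x ≠ x) → Even s.card := by
  intro s
  induction s using Finset.strongInduction with
  | _ s ih =>
    intro hmem hinv hne
    rcases s.eq_empty_or_nonempty with rfl | ⟨x, hx⟩
    · simp
    · have hfx : f x ∈ s := hmem x hx
      have hxne : f x ≠ x := hne x hx
      set t := s \ {x, f x} with ht_def
      have hsub : ({x, f x} : Finset α) ⊆ s := by
        intro y hy
        simp only [Finset.mem_insert, Finset.mem_singleton] at hy
        rcases hy with rfl | rfl <;> assumption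
      have htss : t ⊂ s := Finset.sdiff_ssubset hsub ⟨x, Finset.mem_insert_self _ _⟩
      have hmem_t : ∀ y ∈ t, f y ∈ t := by
        intro y hy
        simp only [ht_def, Finset.mem_sdiff, Finset.mem_insert, Finset.mem_singleton,
          not_or] at hy ⊢
        obtain ⟨hys, hyx, hyfx⟩ := hy
        refine ⟨hmem y hys, ?_, ?_⟩
        · intro hc; exact hyfx (by rw [← hinv y hys, hc])
        · intro hc
          apply hyx
          have : f (f y) = f (f x) := by rw [hc]
          rw [hinv y hys, hinv x hx] at this
          exact this
      have heven := ih t htss hmem_t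
        (fun y hy => hinv y (Finset.mem_sdiff.mp hy).1)
        (fun y hy => hne y (Finset.mem_sdiff.mp hy).1)
      have hpair : ({x, f x} : Finset α).card = 2 := Finset.card_pair hxne.symm
      have hcard : s.card = t.card + 2 := by
        have h1 : t.card = s.card - 2 := by rw [ht_def, Finset.card_sdiff_of_subset hsub, hpair]
        have h2 : 2 ≤ s.card := hpair ▸ Finset.card_le_card hsub
        omega
      rw [hcard]
      exact heven.add (by norm_num)

lemma stair_sum (n : ℕ) : ∑ i, stair n i = n.choose 2 := by
  have h1 : ∑ i, stair n i = ∑ i : Fin n, i.val := by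
    apply Fintype.sum_bijective Fin.rev Fin.rev_bijective
    intro i
    rw [Fin.val_rev]
    show n - 1 - i.val = n - (i.val + 1)
    omega
  rw [h1, Fin.sum_univ_eq_sum_range (fun i => i) n, Finset.sum_range_id,
    Nat.choose_two_right]

lemma exists_rep_of_ne_stair (n : ℕ) (lam : Fin n → ℕ) (hmono : Antitone lam)
    (hsum : ∑ i, lam i = n.choose 2) (hne : lam ≠ stair n) :
    ∃ i j : Fin n, i ≠ j ∧ lam i = lam j := by
  by_contra hcon
  push_neg at hcon
  have hinj : Function.Injective lam := by
    intro i j hij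
    by_contra hne'
    exact hcon i j hne' hij
  have hsa : StrictAnti lam := hmono.strictAnti_of_injective hinj
  have key : ∀ d : ℕ, ∀ k l : Fin n, k.val + d = l.val → lam l + d ≤ lam k := by
    intro d
    induction d with
    | zero =>
      intro k l h
      have : k = l := Fin.ext (by omega)
      subst this; simp
    | succ d ihd =>
      intro k l h
      have hm : k.val + d < n := by have := l.isLt; omega
      have h1 : lam l < lam ⟨k.val + d, hm⟩ := by
        apply hsa
        rw [Fin.lt_def]
        simp; omega
      have h2 : lam ⟨k.val + d, hm⟩ + d ≤ lam k := ihd k ⟨k.val + d, hm⟩ rfl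
      omega
  have hge : ∀ k : Fin n, stair n k ≤ lam k := by
    intro k
    have hk : k.val < n := k.isLt
    have h0 : (0:ℕ) < n := by omega
    have := key (n - 1 - k.val) k ⟨n - 1, by omega⟩ (by simp; omega)
    simp only [stair]
    omega
  have hsum2 : ∑ i, stair n i = ∑ i, lam i := by rw [stair_sum, hsum]
  have heq : ∀ i ∈ Finset.univ, stair n i = lam i :=
    (Finset.sum_eq_sum_iff_of_le (fun i _ => hge i)).mp hsum2
  exact hne (funext fun i => (heq i (Finset.mem_univ i)).symm)

/-- If `lam` is a partition of `C(n,2)` with at most `n` parts, dominated by the staircase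
`(n−1, …, 1, 0)` but different from it, then `N_λ` is even. -/
theorem Nlam_even (n : ℕ) (lam : Fin n → ℕ)
    (hmono : Antitone lam) (hsum : ∑ i, lam i = n.choose 2)
    (hdom : ∀ i : Fin n, partialSum lam i ≤ partialSum (stair n) i)
    (hne : lam ≠ stair n) :
    Even (Nlam n lam) := by
  classical
  obtain ⟨i0, j0, hij0, heq0⟩ := exists_rep_of_ne_stair n lam hmono hsum hne
  have hdup : ¬ (Multiset.map lam Finset.univ.val).Nodup := by
    intro hnd
    exact hij0 (Multiset.inj_on_of_nodup_map hnd i0 (Finset.mem_univ_val i0)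
      j0 (Finset.mem_univ_val j0) heq0)
  have hrep : ∀ a : Matrix (Fin n) (Fin n) Bool, sortedRowSumsEq a lam → hasRep a := by
    intro a ha
    by_contra hno
    apply hdup
    rw [← ha]
    apply Multiset.Nodup.map ?_ Finset.univ.nodup
    intro x y hxy
    by_contra hxy'
    exact hno ⟨(x, y), hxy', hxy⟩
  have hfin : {a : Matrix (Fin n) (Fin n) Bool |
      IsTournament a ∧ sortedRowSumsEq a lam}.Finite := Set.toFinite _
  rw [Nlam, Set.ncard_eq_toFinset_card _ hfin]
  apply even_card_of_invol flipMat
  · intro a ha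
    rw [Set.Finite.mem_toFinset, Set.mem_setOf_eq] at ha ⊢
    have hha : hasRep a := hrep a ha.2
    refine ⟨flipMat_tournament ha.1, ?_⟩
    unfold sortedRowSumsEq
    rw [rowSum_flipMat hha]
    exact ha.2
  · intro a ha
    rw [Set.Finite.mem_toFinset, Set.mem_setOf_eq] at ha
    exact flipMat_flipMat (hrep a ha.2)
  · intro a ha
    rw [Set.Finite.mem_toFinset, Set.mem_setOf_eq] at ha
    exact flipMat_ne (hrep a ha.2) ha.1
end

section
/- Suppose λ = (λ₁ ≥ … ≥ λ_n) is a partition of C(n,2) satisfying λ₁+…+λ_i ≤ (n−1)+…+(n−i) for all i ≤ n. Then there exists a sequence λ' = (n−1, λ'₂, …, λ'_n) with λ'_j ∈ {λ_j − 1, λ_j} for all j ≥ 2, which is nonincreasing, sums to C(n,2), and satisfies (n−1)+λ'₂+…+λ'_i ≤ (n−1)+…+(n−i) for all i. -/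
open Finset

lemma partialSum_eq {n : ℕ} (f : Fin n → ℕ) (i : Fin n) :
    partialSum f i = ∑ k ∈ range (i.val + 1), (if h : k < n then f ⟨k, h⟩ else 0) := by
  have h1 : partialSum f i
      = ∑ k ∈ range n, (if h : k < n then (if k ≤ i.val then f ⟨k, h⟩ else 0) else 0) := by
    rw [partialSum, Finset.sum_filter,
      ← Fin.sum_univ_eq_sum_range (fun k => if h : k < n then (if k ≤ i.val then f ⟨k, h⟩ else 0) else 0) n]
    apply Finset.sum_congr rfl
    intro a _
    rw [dif_pos a.isLt]
    simp only [Fin.le_def, Fin.eta]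
  rw [h1, ← Finset.sum_subset (Finset.range_subset_range.mpr i.isLt)]
  · apply Finset.sum_congr rfl
    intro k hk
    rw [Finset.mem_range] at hk
    have hkn : k < n := lt_of_lt_of_le hk i.isLt
    simp [hkn, Nat.lt_succ_iff.mp hk]
  · intro k hk hk2
    rw [Finset.mem_range] at hk hk2
    simp only [not_lt] at hk2
    by_cases h : k < n <;> simp [h] <;> omega


lemma sum_stair_eq (n : ℕ) : ∑ k ∈ range n, (n - 1 - k) = n.choose 2 := by
  have h := Finset.sum_range_reflect (fun k => k) n
  rw [h, Finset.sum_range_id, Nat.choose_two_right]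

lemma aux_main (n : ℕ) (hn : 2 ≤ n) (L : ℕ → ℕ) (hA : Antitone L) (hL : ∀ k, n ≤ k → L k = 0)
    (hdom : ∀ i, i ≤ n → ∑ k ∈ range i, L k ≤ ∑ k ∈ range i, (n - 1 - k))
    (hsum : ∑ k ∈ range n, L k = ∑ k ∈ range n, (n - 1 - k)) :
    ∃ L' : ℕ → ℕ, L' 0 = n - 1 ∧
      (∀ j, 1 ≤ j → L' j = L j - 1 ∨ L' j = L j) ∧
      (∀ j k, j ≤ k → L' k ≤ L' j) ∧
      (∑ k ∈ range n, L' k = ∑ k ∈ range n, (n - 1 - k)) ∧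
      (∀ i, i ≤ n → ∑ k ∈ range i, L' k ≤ ∑ k ∈ range i, (n - 1 - k)) := by
  classical
  -- basic facts
  have hL0 : L 0 ≤ n - 1 := by
    have h := hdom 1 (by omega)
    simpa using h
  have hL0pos : 1 ≤ L 0 := by
    by_contra h
    push_neg at h
    have hz : ∀ k, L k = 0 := fun k => Nat.le_zero.mp (le_trans (hA (Nat.zero_le k)) (by omega))
    have h1 : ∑ k ∈ range n, L k = 0 := Finset.sum_eq_zero (fun k _ => hz k)
    have h2 : (n - 1 - 0) ≤ ∑ k ∈ range n, (n - 1 - k) :=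
      Finset.single_le_sum (f := fun k => n - 1 - k) (fun _ _ => Nat.zero_le _)
        (Finset.mem_range.mpr (by omega))
    omega
  set d := n - 1 - L 0 with hd
  have hdn : d + 2 ≤ n := by omega
  have hpos : ∀ k, k + 2 ≤ n → 1 ≤ L k := by
    intro k hk
    by_contra h
    push_neg at h
    have hk0 : L k = 0 := by omega
    have htail : ∑ j ∈ range n, L j = ∑ j ∈ range k, L j := by
      rw [← Finset.sum_range_add_sum_Ico L (show k ≤ n by omega)]
      have : ∑ j ∈ Ico k n, L j = 0 :=
        Finset.sum_eq_zero (fun j hj => Nat.le_zero.mp (hk0 ▸ hA (Finset.mem_Ico.mp hj).1))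
      omega
    have h2 := hdom k (by omega)
    have h3 : ∑ j ∈ range k, (n - 1 - j) + (n - 1 - k) ≤ ∑ j ∈ range n, (n - 1 - j) := by
      have h4 := Finset.sum_range_succ (fun j => n - 1 - j) k
      have h5 : ∑ j ∈ range (k + 1), (n - 1 - j) ≤ ∑ j ∈ range n, (n - 1 - j) :=
        Finset.sum_le_sum_of_subset (Finset.range_subset_range.mpr (by omega))
      omega
    omega
  -- rank function
  set r : ℕ → ℕ :=
    fun j => ((Ico 1 n).filter (fun k => L j < L k ∨ (L k = L j ∧ j ≤ k))).card with hrdef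
  have hrself : ∀ j ∈ Ico 1 n, 1 ≤ r j := by
    intro j hj
    exact Finset.card_pos.mpr ⟨j, Finset.mem_filter.mpr ⟨hj, Or.inr ⟨rfl, le_rfl⟩⟩⟩
  have hrlt : ∀ j ∈ Ico 1 n, ∀ b ∈ Ico 1 n, (L b < L j ∨ (L b = L j ∧ b < j)) → r j < r b := by
    intro j hj b hb hrel
    apply Finset.card_lt_card
    rw [Finset.ssubset_iff_of_subset]
    · refine ⟨b, Finset.mem_filter.mpr ⟨hb, Or.inr ⟨rfl, le_rfl⟩⟩, ?_⟩
      intro hmem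
      rcases Finset.mem_filter.mp hmem with ⟨_, hc⟩
      rcases hrel with h1 | ⟨h1, h2⟩ <;> rcases hc with h3 | ⟨h3, h4⟩ <;> omega
    · intro x hx
      rcases Finset.mem_filter.mp hx with ⟨hx1, hc⟩
      refine Finset.mem_filter.mpr ⟨hx1, ?_⟩
      rcases hrel with h1 | ⟨h1, h2⟩ <;> rcases hc with h3 | ⟨h3, h4⟩
      · left; omega
      · left; omega
      · left; omega
      · right; omega
  have hrle : ∀ j ∈ Ico 1 n, ∀ k ∈ Ico 1 n, L j = L k → j ≤ k → r k ≤ r j := by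
    intro j hj k hk he hjk
    apply Finset.card_le_card
    intro x hx
    rcases Finset.mem_filter.mp hx with ⟨hx1, hc⟩
    refine Finset.mem_filter.mpr ⟨hx1, ?_⟩
    rcases hc with h3 | ⟨h3, h4⟩
    · left; omega
    · right; omega
  have hrinj : Set.InjOn r (Ico 1 n) := by
    intro j hj k hk he
    by_contra hne
    rcases lt_trichotomy (L j) (L k) with h | h | h
    · have := hrlt k hk j hj (Or.inl h); omega
    · rcases lt_or_gt_of_ne hne with h2 | h2
      · have := hrlt k hk j hj (Or.inr ⟨h, h2⟩); omega
      · have := hrlt j hj k hk (Or.inr ⟨h.symm, h2⟩); omega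
    · have := hrlt j hj k hk (Or.inl h); omega
  have hrub : ∀ j ∈ Ico 1 n, r j ≤ n - 1 := by
    intro j hj
    calc r j ≤ (Ico 1 n).card := Finset.card_filter_le _ _
    _ = n - 1 := by rw [Nat.card_Ico]
  have himg : (Ico 1 n).image r = Icc 1 (n - 1) := by
    apply Finset.eq_of_subset_of_card_le
    · intro x hx
      rcases Finset.mem_image.mp hx with ⟨j, hj, rfl⟩
      exact Finset.mem_Icc.mpr ⟨hrself j hj, hrub j hj⟩
    · rw [Finset.card_image_of_injOn hrinj, Nat.card_Icc, Nat.card_Ico]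
      omega
  have hScard : ((Ico 1 n).filter (fun j => r j ≤ d)).card = d := by
    have h1 : (((Ico 1 n).filter (fun j => r j ≤ d)).image r)
        = (Icc 1 (n - 1)).filter (fun x => x ≤ d) := by
      rw [← himg, Finset.filter_image]
    have h2 : (((Ico 1 n).filter (fun j => r j ≤ d)).image r).card
        = ((Ico 1 n).filter (fun j => r j ≤ d)).card :=
      Finset.card_image_of_injOn (hrinj.mono (by
        intro x hx; exact (Finset.mem_filter.mp hx).1))
    have h3 : (Icc 1 (n - 1)).filter (fun x => x ≤ d) = Icc 1 d := by
      ext x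
      simp only [Finset.mem_filter, Finset.mem_Icc]
      omega
    rw [h1, h3, Nat.card_Icc] at h2
    omega
  have hSpos : ∀ j ∈ Ico 1 n, r j ≤ d → 1 ≤ L j := by
    intro j hj hrj
    by_contra h
    push_neg at h
    have hj0 : L j = 0 := by omega
    have hfull : (Ico 1 n).filter (fun k => L j < L k ∨ (L k = L j ∧ j ≤ k)) = Ico 1 n := by
      apply Finset.filter_true_of_mem
      intro k hk
      rcases Finset.mem_Ico.mp hk with ⟨hk1, hk2⟩
      by_cases hLk : L k = 0
      · right
        refine ⟨by omega, ?_⟩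
        have : ¬ (k + 2 ≤ n) := fun hc => by have := hpos k hc; omega
        have hjn := (Finset.mem_Ico.mp hj).2
        omega
      · left; omega
    have : r j = n - 1 := by rw [hrdef]; simp only; rw [hfull, Nat.card_Ico]
    omega
  -- the construction
  set L' : ℕ → ℕ := fun k => if k = 0 then n - 1 else if r k ≤ d then L k - 1 else L k
    with hL'def
  have hbul2 : ∀ j, 1 ≤ j → L' j = L j - 1 ∨ L' j = L j := by
    intro j hj
    rw [hL'def]
    simp only [if_neg (show j ≠ 0 by omega)]
    split
    · left; rfl
    · right; rfl
  have hL'0 : L' 0 = n - 1 := by rw [hL'def]; simp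
  have hbul3 : ∀ j k, j ≤ k → L' k ≤ L' j := by
    intro j k hjk
    by_cases hk0 : k = 0
    · subst hk0
      have : j = 0 := by omega
      subst this; exact le_rfl
    have hk' := hbul2 k (by omega)
    by_cases hj0 : j = 0
    · subst hj0
      rw [hL'0]
      have h1 : L k ≤ L 0 := hA (Nat.zero_le k)
      omega
    have hj' := hbul2 j (by omega)
    by_cases hLk0 : L k = 0
    · omega
    have hkn : k < n := by
      by_contra hc
      have := hL k (by omega); omega
    have hLjk : L k ≤ L j := hA hjk
    rcases eq_or_lt_of_le hLjk with heq | hlt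
    · have hrk : r k ≤ r j :=
        hrle j (Finset.mem_Ico.mpr ⟨by omega, by omega⟩) k
          (Finset.mem_Ico.mpr ⟨by omega, hkn⟩) heq.symm hjk
      have hLj1 : 1 ≤ L j := by omega
      rw [hL'def]
      simp only [if_neg hj0, if_neg hk0]
      by_cases hrjd : r j ≤ d
      · rw [if_pos hrjd, if_pos (le_trans hrk hrjd)]
        omega
      · rw [if_neg hrjd]
        split <;> omega
    · omega
  -- sum helpers
  have hsplit : ∀ (f : ℕ → ℤ) (m : ℕ), 0 < m →
      ∑ k ∈ range m, f k = f 0 + ∑ k ∈ Ico 1 m, f k := by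
    intro f m hm
    rw [Finset.range_eq_Ico, Finset.sum_eq_sum_Ico_succ_bot hm]
  have hL'cast : ∀ k ∈ Ico 1 n, (L' k : ℤ) = (L k : ℤ) - (if r k ≤ d then 1 else 0) := by
    intro k hk
    have hk1 := (Finset.mem_Ico.mp hk).1
    rw [hL'def]
    simp only [if_neg (show k ≠ 0 by omega)]
    by_cases hr : r k ≤ d
    · rw [if_pos hr, if_pos hr]
      have := hSpos k hk hr
      omega
    · rw [if_neg hr, if_neg hr]
      omega
  have hcount : ∀ i, ∑ k ∈ Ico 1 i, (if r k ≤ d then (1:ℤ) else 0)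
      = (((Ico 1 i).filter (fun k => r k ≤ d)).card : ℤ) := by
    intro i
    rw [Finset.sum_boole]
  have hsumIco : ∀ i, 1 ≤ i → i ≤ n → ((∑ k ∈ range i, L' k : ℕ) : ℤ)
      = ((n : ℤ) - 1) + ∑ k ∈ Ico 1 i, (L k : ℤ)
        - (((Ico 1 i).filter (fun k => r k ≤ d)).card : ℤ) := by
    intro i hi1 hi2
    rw [Nat.cast_sum, hsplit (fun k => (L' k : ℤ)) i (by omega)]
    have h1 : ∑ k ∈ Ico 1 i, (L' k : ℤ)
        = ∑ k ∈ Ico 1 i, ((L k : ℤ) - (if r k ≤ d then 1 else 0)) := by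
      apply Finset.sum_congr rfl
      intro k hk
      have hk' : k ∈ Ico 1 n := by
        rcases Finset.mem_Ico.mp hk with ⟨a, b⟩
        exact Finset.mem_Ico.mpr ⟨a, by omega⟩
      exact hL'cast k hk'
    rw [h1, Finset.sum_sub_distrib, hcount i, hL'0]
    have : ((n - 1 : ℕ) : ℤ) = (n : ℤ) - 1 := by omega
    rw [this]
    ring
  -- bullet 4 : total sum
  have hbul4 : ∑ k ∈ range n, L' k = ∑ k ∈ range n, (n - 1 - k) := by
    have h4 : ((∑ k ∈ range n, L' k : ℕ) : ℤ) = ((∑ k ∈ range n, (n - 1 - k) : ℕ) : ℤ) := by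
      rw [hsumIco n (by omega) le_rfl, hScard]
      have h5 : ((∑ k ∈ range n, L k : ℕ) : ℤ) = (L 0 : ℤ) + ∑ k ∈ Ico 1 n, (L k : ℤ) := by
        rw [Nat.cast_sum, hsplit (fun k => (L k : ℤ)) n (by omega)]
      have h6 : ((∑ k ∈ range n, L k : ℕ) : ℤ) = ((∑ k ∈ range n, (n - 1 - k) : ℕ) : ℤ) := by
        exact_mod_cast hsum
      have h7 : (L 0 : ℤ) + (d : ℤ) = (n : ℤ) - 1 := by omega
      linarith
    exact_mod_cast h4
  -- bullet 5 : dominance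
  have hbul5 : ∀ i, i ≤ n → ∑ k ∈ range i, L' k ≤ ∑ k ∈ range i, (n - 1 - k) := by
    intro i hi
    rcases Nat.eq_zero_or_pos i with rfl | hi1
    · simp
    set c := ((Ico 1 i).filter (fun k => r k ≤ d)).card with hc
    have hPle : ((∑ k ∈ range i, L k : ℕ) : ℤ) ≤ ((∑ k ∈ range i, (n - 1 - k) : ℕ) : ℤ) := by
      exact_mod_cast hdom i hi
    have hPsplit : ((∑ k ∈ range i, L k : ℕ) : ℤ) = (L 0 : ℤ) + ∑ k ∈ Ico 1 i, (L k : ℤ) := by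
      rw [Nat.cast_sum, hsplit (fun k => (L k : ℤ)) i (by omega)]
    have hdz : (L 0 : ℤ) + (d : ℤ) = (n : ℤ) - 1 := by omega
    have hDi : ((∑ k ∈ range i, (n - 1 - k) : ℕ) : ℤ) - ((∑ k ∈ range i, L k : ℕ) : ℤ)
        = (d : ℤ) + ∑ k ∈ Ico 1 i, (((n - 1 - k : ℕ) : ℤ) - (L k : ℤ)) := by
      rw [Nat.cast_sum, Nat.cast_sum, hsplit (fun k => ((n - 1 - k : ℕ) : ℤ)) i (by omega),
        hsplit (fun k => (L k : ℤ)) i (by omega), Finset.sum_sub_distrib]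
      have h1 : ((n - 1 - 0 : ℕ) : ℤ) = (n : ℤ) - 1 := by omega
      simp only [h1]
      linarith
    have key : (d : ℤ) ≤ (((∑ k ∈ range i, (n - 1 - k) : ℕ) : ℤ)
        - ((∑ k ∈ range i, L k : ℕ) : ℤ)) + (c : ℤ) := by
      by_cases hcd : d ≤ c
      · have : (d : ℤ) ≤ (c : ℤ) := by exact_mod_cast hcd
        linarith
      push_neg at hcd
      -- split S into parts below and at-least i
      set Sge := ((Ico 1 n).filter (fun j => r j ≤ d)).filter (fun j => i ≤ j) with hSge
      have hcsplit : c + Sge.card = d := by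
        have h1 := Finset.card_filter_add_card_filter_not
          (s := (Ico 1 n).filter (fun j => r j ≤ d)) (p := fun j => i ≤ j)
        have h2 : (((Ico 1 n).filter (fun j => r j ≤ d)).filter (fun j => ¬ i ≤ j))
            = (Ico 1 i).filter (fun k => r k ≤ d) := by
          ext x
          simp only [Finset.mem_filter, Finset.mem_Ico, not_le]
          constructor
          · rintro ⟨⟨⟨a, b⟩, e⟩, f⟩
            exact ⟨⟨a, f⟩, e⟩
          · rintro ⟨⟨a, b⟩, e⟩
            exact ⟨⟨⟨a, by omega⟩, e⟩, b⟩
        rw [h2] at h1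
        rw [hSge, hc]
        omega
      obtain ⟨b, hbmem, hbmin⟩ := Finset.exists_min_image Sge L
        (Finset.card_pos.mp (by omega))
      have hbmem' := hbmem
      rw [hSge, Finset.mem_filter, Finset.mem_filter, Finset.mem_Ico] at hbmem'
      obtain ⟨⟨⟨hb1, hbn⟩, hrb⟩, hib⟩ := hbmem'
      set v := L b with hv
      have hv1 : 1 ≤ v := hSpos b (Finset.mem_Ico.mpr ⟨hb1, hbn⟩) hrb
      obtain ⟨e, he1, he2⟩ : ∃ e, e ∈ (range n).filter (fun k => v ≤ L k) ∧
          ∀ x ∈ (range n).filter (fun k => v ≤ L k), x ≤ e := by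
        have hEne : ((range n).filter (fun k => v ≤ L k)).Nonempty :=
          ⟨b, Finset.mem_filter.mpr ⟨Finset.mem_range.mpr hbn, le_rfl⟩⟩
        exact ⟨_, Finset.max'_mem _ hEne, fun x hx => Finset.le_max' _ x hx⟩
      rw [Finset.mem_filter, Finset.mem_range] at he1
      obtain ⟨hen, hev⟩ := he1
      have hbe : b ≤ e := he2 b (Finset.mem_filter.mpr ⟨Finset.mem_range.mpr hbn, le_rfl⟩)
      have hie : i ≤ e := le_trans hib hbe
      have hLke : ∀ k, k ≤ e → v ≤ L k := fun k hk => le_trans hev (hA hk)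
      have hSgesub : Sge ⊆ Icc i e := by
        intro j hj
        have hj' := hj
        rw [hSge, Finset.mem_filter, Finset.mem_filter, Finset.mem_Ico] at hj'
        obtain ⟨⟨⟨hj1, hjn⟩, hrj⟩, hij⟩ := hj'
        refine Finset.mem_Icc.mpr ⟨hij, he2 j ?_⟩
        exact Finset.mem_filter.mpr ⟨Finset.mem_range.mpr hjn, hbmin j hj⟩
      have hcard2 : d ≤ c + (e + 1 - i) := by
        have h1 := Finset.card_le_card hSgesub
        rw [Nat.card_Icc] at h1
        omega
      by_cases hvc : n ≤ v + i
      · -- large values : use the segment [i, e]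
        have hTP := hdom (e + 1) (by omega)
        have hPs := Finset.sum_range_add_sum_Ico L (show i ≤ e + 1 by omega)
        have hTs := Finset.sum_range_add_sum_Ico (fun k => n - 1 - k) (show i ≤ e + 1 by omega)
        have hsum1 : ((e + 1 - i : ℕ) : ℤ)
            ≤ ∑ k ∈ Ico i (e + 1), ((L k : ℤ) - ((n - 1 - k : ℕ) : ℤ)) := by
          have h2 : ∀ k ∈ Ico i (e + 1), (1 : ℤ) ≤ (L k : ℤ) - ((n - 1 - k : ℕ) : ℤ) := by
            intro k hk
            rcases Finset.mem_Ico.mp hk with ⟨hk1, hk2⟩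
            have h3 := hLke k (by omega)
            omega
          calc ((e + 1 - i : ℕ) : ℤ) = ∑ _k ∈ Ico i (e + 1), (1 : ℤ) := by
                rw [Finset.sum_const, Nat.card_Ico]; simp
            _ ≤ _ := Finset.sum_le_sum h2
        have hcast1 : ((∑ k ∈ range (e+1), L k : ℕ) : ℤ)
            = ((∑ k ∈ range i, L k : ℕ) : ℤ) + ∑ k ∈ Ico i (e+1), (L k : ℤ) := by
          rw [← hPs]; push_cast; ring
        have hcast2 : ((∑ k ∈ range (e+1), (n - 1 - k) : ℕ) : ℤ)
            = ((∑ k ∈ range i, (n - 1 - k) : ℕ) : ℤ)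
              + ∑ k ∈ Ico i (e+1), ((n - 1 - k : ℕ) : ℤ) := by
          rw [← hTs]; push_cast; ring
        have hTP' : ((∑ k ∈ range (e+1), L k : ℕ) : ℤ)
            ≤ ((∑ k ∈ range (e+1), (n - 1 - k) : ℕ) : ℤ) := by exact_mod_cast hTP
        have hsub : ∑ k ∈ Ico i (e + 1), ((L k : ℤ) - ((n - 1 - k : ℕ) : ℤ))
            = ∑ k ∈ Ico i (e+1), (L k : ℤ) - ∑ k ∈ Ico i (e+1), ((n - 1 - k : ℕ) : ℤ) :=
          Finset.sum_sub_distrib _ _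
        have hdc : (d : ℤ) ≤ (c : ℤ) + ((e + 1 - i : ℕ) : ℤ) := by
          exact_mod_cast hcard2
        linarith
      · -- small values
        push_neg at hvc
        set A := (Ico 1 i).filter (fun k => v < L k) with hA2
        have hAc : A.card ≤ c := by
          rw [hc]
          apply Finset.card_le_card
          intro k hk
          rw [hA2, Finset.mem_filter, Finset.mem_Ico] at hk
          obtain ⟨⟨hk1, hk2⟩, hkv⟩ := hk
          refine Finset.mem_filter.mpr ⟨Finset.mem_Ico.mpr ⟨hk1, hk2⟩, ?_⟩
          have := hrlt k (Finset.mem_Ico.mpr ⟨hk1, by omega⟩)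
            b (Finset.mem_Ico.mpr ⟨hb1, hbn⟩) (Or.inl hkv)
          omega
        by_cases hAne : A.Nonempty
        · obtain ⟨a0, ha0, ha0max⟩ : ∃ a0, a0 ∈ A ∧ ∀ x ∈ A, x ≤ a0 :=
            ⟨A.max' hAne, A.max'_mem hAne, fun x hx => Finset.le_max' A x hx⟩
          rw [hA2, Finset.mem_filter, Finset.mem_Ico] at ha0
          obtain ⟨⟨hM1, hMi0⟩, hMv⟩ := ha0
          set M := a0 + 1 with hM
          have hMi : M ≤ i := by omega
          have hAeq : A = Ico 1 M := by
            ext x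
            rw [hA2, Finset.mem_filter, Finset.mem_Ico, Finset.mem_Ico]
            constructor
            · rintro ⟨⟨hx1, hx2⟩, hxv⟩
              exact ⟨hx1, by
                have := ha0max x (by
                  rw [hA2, Finset.mem_filter, Finset.mem_Ico]; exact ⟨⟨hx1, hx2⟩, hxv⟩)
                omega⟩
            · rintro ⟨hx1, hx2⟩
              have hxle : x ≤ a0 := by omega
              refine ⟨⟨hx1, by omega⟩, lt_of_lt_of_le hMv (hA hxle)⟩
          have hAcard : A.card = M - 1 := by rw [hAeq, Nat.card_Ico]
          have hsumA : -(((M - 1 : ℕ)) : ℤ)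
              ≤ ∑ k ∈ Ico 1 M, (((n - 1 - k : ℕ) : ℤ) - (L k : ℤ)) := by
            rw [Finset.sum_Ico_eq_sum_range]
            have hstep : ∀ k ∈ range (M - 1),
                (((n - 1 - k : ℕ) : ℤ) - (L k : ℤ)) - 1
                  ≤ ((n - 1 - (1 + k) : ℕ) : ℤ) - (L (1 + k) : ℤ) := by
              intro k hk
              rw [Finset.mem_range] at hk
              have h1 : L (1 + k) ≤ L k := hA (by omega)
              have h2 : 1 + k ≤ n - 1 := by omega
              omega
            have hTP3 := hdom (M - 1) (by omega)
            have hTP3' : ((∑ k ∈ range (M-1), L k : ℕ) : ℤ)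
                ≤ ((∑ k ∈ range (M-1), (n - 1 - k) : ℕ) : ℤ) := by exact_mod_cast hTP3
            have hc1 : ((∑ k ∈ range (M-1), L k : ℕ) : ℤ)
                = ∑ k ∈ range (M-1), (L k : ℤ) := by push_cast; ring
            have hc2 : ((∑ k ∈ range (M-1), (n - 1 - k) : ℕ) : ℤ)
                = ∑ k ∈ range (M-1), ((n - 1 - k : ℕ) : ℤ) := by push_cast; ring
            calc -(((M - 1 : ℕ)) : ℤ)
                ≤ ∑ k ∈ range (M-1), ((n - 1 - k : ℕ) : ℤ)
                  - ∑ k ∈ range (M-1), (L k : ℤ) - (M - 1 : ℕ) := by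
                  rw [← hc1, ← hc2]; linarith
              _ = ∑ k ∈ range (M-1), ((((n - 1 - k : ℕ) : ℤ) - (L k : ℤ)) - 1) := by
                  rw [Finset.sum_sub_distrib, Finset.sum_sub_distrib, Finset.sum_const,
                    Finset.card_range]
                  push_cast
                  ring
              _ ≤ _ := Finset.sum_le_sum hstep
          have hsumB : (0 : ℤ) ≤ ∑ k ∈ Ico M i, (((n - 1 - k : ℕ) : ℤ) - (L k : ℤ)) := by
            apply Finset.sum_nonneg
            intro k hk
            rcases Finset.mem_Ico.mp hk with ⟨hk1, hk2⟩
            have hkA : k ∉ A := by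
              rw [hAeq]
              intro hc2
              have := (Finset.mem_Ico.mp hc2).2
              omega
            have hkv : L k ≤ v := by
              by_contra hcon
              exact hkA (by
                rw [hA2, Finset.mem_filter, Finset.mem_Ico]
                exact ⟨⟨by omega, hk2⟩, by omega⟩)
            omega
          have hcomb := Finset.sum_Ico_consecutive
            (fun k => (((n - 1 - k : ℕ) : ℤ) - (L k : ℤ))) (show 1 ≤ M by omega) (show M ≤ i by omega)
          have hAcZ : ((M - 1 : ℕ) : ℤ) ≤ (c : ℤ) := by
            have : M - 1 ≤ c := by omega
            exact_mod_cast this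
          rw [hDi]
          linarith
        · -- A empty : all entries at most v
          rw [Finset.not_nonempty_iff_eq_empty] at hAne
          have hterm0 : (0:ℤ) ≤ ∑ k ∈ Ico 1 i, (((n - 1 - k : ℕ) : ℤ) - (L k : ℤ)) := by
            apply Finset.sum_nonneg
            intro k hk
            rcases Finset.mem_Ico.mp hk with ⟨hk1, hk2⟩
            have hkv : L k ≤ v := by
              by_contra hcon
              have : k ∈ A := by
                rw [hA2, Finset.mem_filter, Finset.mem_Ico]
                exact ⟨⟨hk1, hk2⟩, by omega⟩
              rw [hAne] at this
              exact absurd this (Finset.notMem_empty k)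
            omega
          rw [hDi]
          have : (0:ℤ) ≤ (c : ℤ) := Int.natCast_nonneg c
          linarith
    have hfin : ((∑ k ∈ range i, L' k : ℕ) : ℤ) ≤ ((∑ k ∈ range i, (n - 1 - k) : ℕ) : ℤ) := by
      rw [hsumIco i hi1 hi]
      linarith
    exact_mod_cast hfin
  exact ⟨L', hL'0, hbul2, hbul3, hbul4, hbul5⟩


/-- Lemma 4.6 of the paper: if `lam` is a partition of `C(n,2)` whose partial sums are
bounded by those of `(n−1, n−2, …)`, then there is a nonincreasing sequence
`lam' = (n−1, lam'₂, …, lam'ₙ)` with `lam'_j ∈ {lam_j − 1, lam_j}` for `j ≥ 2`, summing to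
`C(n,2)`, whose partial sums are bounded by those of `(n−1, n−2, …)`. -/
theorem exists_lambda_prime (n : ℕ) (hn : 0 < n) (lam : Fin n → ℕ)
    (hmono : Antitone lam) (hsum : ∑ i, lam i = n.choose 2)
    (hdom : ∀ i : Fin n, partialSum lam i ≤ partialSum (stair n) i) :
    ∃ lam' : Fin n → ℕ,
      lam' ⟨0, hn⟩ = n - 1 ∧
      (∀ j : Fin n, j ≠ ⟨0, hn⟩ → lam' j = lam j - 1 ∨ lam' j = lam j) ∧
      Antitone lam' ∧
      (∑ i, lam' i = n.choose 2) ∧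
      ∀ i : Fin n, partialSum lam' i ≤ partialSum (stair n) i := by
  rcases eq_or_lt_of_le (show 1 ≤ n from hn) with h1 | hn2
  · -- n = 1
    subst h1
    refine ⟨lam, ?_, fun j hj => Or.inr rfl, hmono, hsum, hdom⟩
    have h0 : lam 0 = 0 := by simpa using hsum
    simpa using h0
  have hn' : 2 ≤ n := hn2
  set L : ℕ → ℕ := fun k => if h : k < n then lam ⟨k, h⟩ else 0 with hLdef
  have hLval : ∀ (j : Fin n), L j.val = lam j := by
    intro j
    rw [hLdef]
    simp only [j.isLt, dif_pos, Fin.eta]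
  have hA : Antitone L := by
    intro a b hab
    by_cases hb : b < n
    · have ha : a < n := lt_of_le_of_lt hab hb
      rw [hLdef]
      simp only [dif_pos ha, dif_pos hb]
      exact hmono (show (⟨a, ha⟩ : Fin n) ≤ ⟨b, hb⟩ from hab)
    · rw [hLdef]
      simp only [dif_neg hb]
      exact Nat.zero_le _
  have hLz : ∀ k, n ≤ k → L k = 0 := by
    intro k hk
    rw [hLdef]
    simp only [dif_neg (not_lt.mpr hk)]
  have hstair : ∀ i, i ≤ n →
      (∑ k ∈ range i, (if h : k < n then stair n ⟨k, h⟩ else 0)) = ∑ k ∈ range i, (n - 1 - k) := by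
    intro i hi
    apply Finset.sum_congr rfl
    intro k hk
    rw [Finset.mem_range] at hk
    rw [dif_pos (by omega : k < n)]
    rfl
  have hsum' : ∑ k ∈ range n, L k = ∑ k ∈ range n, (n - 1 - k) := by
    rw [sum_stair_eq, ← hsum, ← Fin.sum_univ_eq_sum_range (fun k => L k) n]
    exact Finset.sum_congr rfl (fun j _ => hLval j)
  have hdom' : ∀ i, i ≤ n → ∑ k ∈ range i, L k ≤ ∑ k ∈ range i, (n - 1 - k) := by
    intro i hi
    rcases Nat.eq_zero_or_pos i with rfl | hi1
    · simp
    have hii : i - 1 < n := by omega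
    have h2 := hdom ⟨i - 1, hii⟩
    rw [partialSum_eq, partialSum_eq] at h2
    simp only at h2
    have h3 : (i - 1) + 1 = i := by omega
    rw [h3] at h2
    rw [hstair i hi] at h2
    calc ∑ k ∈ range i, L k
        = ∑ k ∈ range i, (if h : k < n then lam ⟨k, h⟩ else 0) := rfl
      _ ≤ ∑ k ∈ range i, (n - 1 - k) := h2
  obtain ⟨L', hL'0, hL'12, hL'anti, hL'sum, hL'dom⟩ :=
    aux_main n hn' L hA hLz hdom' hsum'
  refine ⟨fun j => L' j.val, hL'0, ?_, ?_, ?_, ?_⟩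
  · intro j hj
    have hj1 : 1 ≤ j.val := by
      rcases Nat.eq_zero_or_pos j.val with h | h
      · exact absurd (Fin.ext h) hj
      · exact h
    rcases hL'12 j.val hj1 with h | h
    · left; exact h.trans (by rw [hLval j])
    · right; exact h.trans (hLval j)
  · intro a b hab
    exact hL'anti a.val b.val hab
  · rw [← sum_stair_eq n, ← hL'sum]
    exact Fin.sum_univ_eq_sum_range (fun k => L' k) n
  · intro i
    rw [partialSum_eq, partialSum_eq]
    have h1 : (∑ k ∈ range (i.val + 1), (if h : k < n then L' k else 0))
        = ∑ k ∈ range (i.val + 1), L' k := by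
      apply Finset.sum_congr rfl
      intro k hk
      rw [Finset.mem_range] at hk
      rw [dif_pos (by omega : k < n)]
    rw [h1, hstair (i.val + 1) i.isLt]
    exact hL'dom (i.val + 1) i.isLt
end

section
/- Let α, β be partitions of the same size with at most p, resp. q, parts. If RT(α,β) ≠ ∅ then β ⪯ ᵗα in dominance order (ᵗα the conjugate partition). If β = ᵗα, then #RT(α,β) = 1. If β ≺ ᵗα strictly, then #RT(α,β) ≥ 2. -/
open Finset

/-- The `i`-th row sum of a boolean matrix. -/
def rowSumB {p q : ℕ} (a : Matrix (Fin p) (Fin q) Bool) (i : Fin p) : ℕ :=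
  (Finset.univ.filter fun j => a i j = true).card

/-- The `j`-th column sum of a boolean matrix. -/
def colSumB {p q : ℕ} (a : Matrix (Fin p) (Fin q) Bool) (j : Fin q) : ℕ :=
  (Finset.univ.filter fun i => a i j = true).card

/-- `M_{p,q}(α,β)`: the p×q 0/1 matrices with row sums `α` and column sums `β`. -/
def MatSet (p q : ℕ) (α : Fin p → ℕ) (β : Fin q → ℕ) : Set (Matrix (Fin p) (Fin q) Bool) :=
  {a | (∀ i, rowSumB a i = α i) ∧ ∀ j, colSumB a j = β j}

/-- `RT(α,β)`: row-tableaux of shape `α` and weight `β`.  A tableau with strictly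
increasing rows is encoded by the finite set of entries of each row: row `i` is a set of
`α i` entries (column indices), and the entry `j` occurs `β j` times in the tableau. -/
def RTSet (p q : ℕ) (α : Fin p → ℕ) (β : Fin q → ℕ) : Set (Fin p → Finset (Fin q)) :=
  {T | (∀ i, (T i).card = α i) ∧ ∀ j, (Finset.univ.filter fun i => j ∈ T i).card = β j}

/-- The conjugate (transpose) partition of `α`, as a function `ℕ → ℕ`
(`conj α j` = number of parts of `α` that are `≥ j+1`). -/
def conjP {p : ℕ} (α : Fin p → ℕ) : ℕ → ℕ :=
  fun j => (Finset.univ.filter fun i => j < α i).card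

/-- A partition with at most `q` parts extended by zeros to a function `ℕ → ℕ`. -/
def extP {q : ℕ} (β : Fin q → ℕ) : ℕ → ℕ :=
  fun j => if h : j < q then β ⟨j, h⟩ else 0

/-- Dominance order on partitions (given as functions `ℕ → ℕ`): all partial sums of `f`
are bounded by those of `g`. -/
def DomP (f g : ℕ → ℕ) : Prop :=
  ∀ J : ℕ, ∑ j ∈ Finset.range J, f j ≤ ∑ j ∈ Finset.range J, g j

/-! ### Auxiliary lemmas -/

lemma card_filter_val_lt (q J : ℕ) :
    (univ.filter fun j : Fin q => j.val < J).card = min J q := by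
  have h : (univ.filter fun j : Fin q => j.val < J) = Finset.attachFin (range (min J q))
      (by intro m hm; simp at hm; omega) := by
    ext j; simp [Finset.mem_attachFin]
  rw [h, Finset.card_attachFin, Finset.card_range]

lemma extP_sum {q : ℕ} (β : Fin q → ℕ) (J : ℕ) :
    ∑ j ∈ Finset.range J, extP β j = ∑ j ∈ univ.filter (fun j : Fin q => j.val < J), β j := by
  set f : ℕ → ℕ := fun j => if j < J then extP β j else 0 with hf
  have h1 : ∑ j ∈ Finset.range J, extP β j = ∑ j ∈ Finset.range J, f j :=
    Finset.sum_congr rfl fun j hj => by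
      simp only [hf]; rw [if_pos (Finset.mem_range.mp hj)]
  have h2 : ∑ j ∈ univ.filter (fun j : Fin q => j.val < J), β j = ∑ j ∈ Finset.range q, f j := by
    rw [Finset.sum_filter, ← Fin.sum_univ_eq_sum_range f q]
    refine Finset.sum_congr rfl fun j _ => ?_
    simp only [hf, extP, j.isLt, dif_pos, Fin.eta]
  rw [h1, h2]
  rcases le_total J q with h | h
  · exact Finset.sum_subset (Finset.range_subset_range.mpr h) fun x _ hx => by
      simp only [hf]; rw [if_neg (by simpa using hx)]
  · exact (Finset.sum_subset (Finset.range_subset_range.mpr h) fun x _ hx => by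
      simp only [hf, extP]; rw [dif_neg (by simpa using hx)]; simp).symm

lemma conjP_sum {p : ℕ} (α : Fin p → ℕ) (J : ℕ) :
    ∑ j ∈ Finset.range J, conjP α j = ∑ i : Fin p, min (α i) J := by
  unfold conjP
  simp_rw [Finset.card_filter]
  rw [Finset.sum_comm]
  refine Finset.sum_congr rfl fun i _ => ?_
  have h : (range J).filter (fun j => j < α i) = range (min (α i) J) := by
    ext m; simp; omega
  rw [← Finset.sum_filter, h, Finset.sum_const, Finset.card_range, smul_eq_mul, mul_one]

lemma double_count {p q : ℕ} (T : Fin p → Finset (Fin q)) (β : Fin q → ℕ)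
    (hT : ∀ j, (univ.filter fun i => j ∈ T i).card = β j) (J : ℕ) :
    ∑ j ∈ univ.filter (fun j : Fin q => j.val < J), β j
      = ∑ i, ((T i).filter fun j => j.val < J).card := by
  have h1 : ∀ j, β j = ∑ i : Fin p, if j ∈ T i then 1 else 0 := fun j => by
    rw [← hT j, Finset.card_filter]
  simp_rw [h1]
  rw [Finset.sum_comm]
  refine Finset.sum_congr rfl fun i _ => ?_
  rw [Finset.card_filter, Finset.sum_filter]
  have : ∀ j : Fin q, (if j.val < J then (if j ∈ T i then (1:ℕ) else 0) else 0)
      = (if j ∈ T i then (if j.val < J then (1:ℕ) else 0) else 0) := fun j => by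
    by_cases h : j.val < J <;> by_cases h' : j ∈ T i <;> simp [h, h']
  simp_rw [this]
  rw [Finset.sum_ite_mem, Finset.univ_inter]

lemma row_bound {p q : ℕ} {T : Fin p → Finset (Fin q)} {α : Fin p → ℕ} (i : Fin p)
    (hc : (T i).card = α i) (J : ℕ) :
    ((T i).filter fun j => j.val < J).card ≤ min (α i) J := by
  refine le_min (hc ▸ Finset.card_le_card (Finset.filter_subset _ _)) ?_
  calc ((T i).filter fun j => j.val < J).card
      ≤ (univ.filter fun j : Fin q => j.val < J).card :=
        Finset.card_le_card (by intro x hx; simp at hx ⊢; exact hx.2)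
    _ ≤ J := by rw [card_filter_val_lt]; omega

/-- Part (a): membership in `RTSet` implies the dominance inequalities. -/
lemma partA {p q : ℕ} {α : Fin p → ℕ} {β : Fin q → ℕ} {T : Fin p → Finset (Fin q)}
    (hT : T ∈ RTSet p q α β) : DomP (extP β) (conjP α) := by
  intro J
  rw [extP_sum, conjP_sum, double_count T β hT.2 J]
  exact Finset.sum_le_sum fun i _ => row_bound i (hT.1 i) J

/-- The canonical (left-justified) tableau. -/
def canonT (p q : ℕ) (α : Fin p → ℕ) : Fin p → Finset (Fin q) :=
  fun i => univ.filter fun j => j.val < α i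

lemma canonT_mem {p q : ℕ} {α : Fin p → ℕ} (hq : ∀ i, α i ≤ q) :
    canonT p q α ∈ RTSet p q α (fun j => conjP α j.val) := by
  constructor
  · intro i
    rw [canonT, card_filter_val_lt]; exact min_eq_left (hq i)
  · intro j
    simp only [canonT, conjP]
    congr 1
    ext i; simp

lemma mem_canon_unique {p q : ℕ} {α : Fin p → ℕ} {β : Fin q → ℕ}
    {T : Fin p → Finset (Fin q)} (hT : T ∈ RTSet p q α β)
    (heq : extP β = conjP α) : T = canonT p q α := by
  funext i₀
  set J := α i₀ with hJ
  have hsums : ∑ i, ((T i).filter fun j => j.val < J).card = ∑ i, min (α i) J := by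
    rw [← double_count T β hT.2 J, ← extP_sum, heq, conjP_sum]
  have hle : ∀ i ∈ univ, ((T i).filter fun j => j.val < J).card ≤ min (α i) J :=
    fun i _ => row_bound i (hT.1 i) J
  have heach := (Finset.sum_eq_sum_iff_of_le hle).mp hsums i₀ (Finset.mem_univ _)
  have hfull : ((T i₀).filter fun j => j.val < J).card = (T i₀).card := by
    rw [heach, hT.1 i₀]; exact min_self _
  have hsub : T i₀ ⊆ canonT p q α i₀ := by
    have hfil : (T i₀).filter (fun j => j.val < J) = T i₀ :=
      Finset.eq_of_subset_of_card_le (Finset.filter_subset _ _) (le_of_eq hfull.symm)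
    intro j hj
    rw [← hfil] at hj
    simp only [Finset.mem_filter] at hj
    simp [canonT, hj.2]; exact hj.2
  refine Finset.eq_of_subset_of_card_le hsub ?_
  rw [hT.1 i₀, canonT, card_filter_val_lt]
  exact min_le_left _ _

lemma alpha_le_q {p q : ℕ} {α : Fin p → ℕ} {β : Fin q → ℕ}
    (hsum : ∑ i, α i = ∑ j, β j) (hdom : DomP (extP β) (conjP α)) :
    ∀ i, α i ≤ q := by
  have h1 : ∑ j ∈ range q, extP β j = ∑ j, β j := by
    rw [extP_sum]; congr 1; ext j; simp [j.isLt]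
  have h2 := hdom q
  rw [h1, conjP_sum] at h2
  have h3 : ∑ i, min (α i) q ≤ ∑ i, α i := Finset.sum_le_sum fun i _ => min_le_left _ _
  have h4 : ∑ i, min (α i) q = ∑ i, α i := le_antisymm h3 (by omega)
  intro i
  have := (Finset.sum_eq_sum_iff_of_le (fun i _ => min_le_left (α i) q)).mp h4 i (Finset.mem_univ _)
  omega

lemma conjP_eq_zero {p q : ℕ} {α : Fin p → ℕ} (hq : ∀ i, α i ≤ q) {J : ℕ} (hJ : q ≤ J) :
    conjP α J = 0 := by
  rw [conjP, Finset.card_eq_zero, Finset.filter_eq_empty_iff]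
  intro i _
  have := hq i; omega

lemma extP_eq_conj_of_canon {p q : ℕ} {α : Fin p → ℕ} {β : Fin q → ℕ}
    (hq : ∀ i, α i ≤ q) (hβ : ∀ j : Fin q, β j = conjP α j.val) :
    extP β = conjP α := by
  funext J
  by_cases h : J < q
  · rw [extP]; rw [dif_pos h]; exact hβ ⟨J, h⟩
  · rw [extP, dif_neg h, conjP_eq_zero hq (by omega)]


/-! ### chain lemma -/

-- downward closed subsets of Fin q are initial segments
lemma downward_closed_eq {q : ℕ} (S : Finset (Fin q))
    (hdc : ∀ x y : Fin q, x ≤ y → y ∈ S → x ∈ S) :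
    ∀ x : Fin q, x ∈ S ↔ x.val < S.card := by
  intro x
  constructor
  · intro hx
    have hsub : (univ.filter fun y : Fin q => y.val < x.val + 1) ⊆ S := by
      intro y hy
      simp only [Finset.mem_filter] at hy
      exact hdc y x (by omega) hx
    have := Finset.card_le_card hsub
    have hcf : (univ.filter fun y : Fin q => y.val < x.val + 1).card = min (x.val+1) q := by
      have h : (univ.filter fun j : Fin q => j.val < x.val+1) = Finset.attachFin (range (min (x.val+1) q))
          (by intro m hm; simp at hm; omega) := by
        ext j; simp [Finset.mem_attachFin]
      rw [h, Finset.card_attachFin, Finset.card_range]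
    rw [hcf] at this
    have := x.isLt; omega
  · intro hx
    by_contra hxS
    have hsub : S ⊆ univ.filter fun y : Fin q => y.val < x.val := by
      intro y hy
      simp only [Finset.mem_filter, Finset.mem_univ, true_and]
      by_contra h
      exact hxS (hdc x y (by omega) hy)
    have := Finset.card_le_card hsub
    have hcf : (univ.filter fun y : Fin q => y.val < x.val).card = min x.val q := by
      have h : (univ.filter fun j : Fin q => j.val < x.val) = Finset.attachFin (range (min x.val q))
          (by intro m hm; simp at hm; omega) := by
        ext j; simp [Finset.mem_attachFin]
      rw [h, Finset.card_attachFin, Finset.card_range]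
    rw [hcf] at this
    have := x.isLt; omega

lemma conjP_antitone {p : ℕ} (α : Fin p → ℕ) : Antitone (conjP α) := by
  intro J K hJK
  exact Finset.card_le_card (Finset.monotone_filter_right _ (fun i _ hi => lt_of_le_of_lt hJK hi))

def measureP {p : ℕ} (q : ℕ) (α : Fin p → ℕ) (β : Fin q → ℕ) : ℕ :=
  ∑ J ∈ range (q+1), (∑ j ∈ range J, conjP α j - ∑ j ∈ range J, extP β j)

section move
variable {p q : ℕ} {α : Fin p → ℕ} {β : Fin q → ℕ}

lemma move_lemma (hβ : Antitone β) (hq : ∀ i, α i ≤ q)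
    (htot : ∀ J, q ≤ J → ∑ j ∈ range J, extP β j = ∑ j ∈ range J, conjP α j)
    (hdom : DomP (extP β) (conjP α)) (hne : extP β ≠ conjP α) :
    ∃ (jF kF : Fin q) (β' : Fin q → ℕ), jF.val < kF.val ∧ 1 ≤ β kF ∧
      β' jF = β jF + 1 ∧ β' kF = β kF - 1 ∧ (∀ x, x ≠ jF → x ≠ kF → β' x = β x) ∧
      Antitone β' ∧ (∑ x, β' x = ∑ x, β x) ∧ DomP (extP β') (conjP α) ∧
      measureP q α β' < measureP q α β := by
  set Pm : ℕ → ℕ := fun J => ∑ j ∈ range J, extP β j with hPm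
  set Pl : ℕ → ℕ := fun J => ∑ j ∈ range J, conjP α j with hPl
  have hpoint : ∀ J, Pm (J+1) = Pm J + extP β J := fun J => Finset.sum_range_succ _ J
  have hpointl : ∀ J, Pl (J+1) = Pl J + conjP α J := fun J => Finset.sum_range_succ _ J
  have ha_ex : ∃ J, Pm J < Pl J := by
    by_contra h
    push_neg at h
    refine hne (funext fun J => ?_)
    have h1 : ∀ K, Pm K = Pl K := fun K => le_antisymm (hdom K) (h K)
    have := h1 (J+1); have := h1 J
    rw [hpoint J, hpointl J] at *
    omega
  set a := Nat.find ha_ex with hadef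
  have hA : Pm a < Pl a := Nat.find_spec ha_ex
  have haeq : ∀ J < a, Pm J = Pl J := fun J hJ =>
    le_antisymm (hdom J) (not_lt.mp (Nat.find_min ha_ex hJ))
  have ha_pos : 0 < a := by
    rcases Nat.eq_zero_or_pos a with h | h
    · exfalso; rw [h] at hA; simp [hPm, hPl] at hA
    · exact h
  have ha_lt_q : a < q := by
    by_contra h
    have h2 : Pm a = Pl a := htot a (not_lt.mp h)
    omega
  have hmuj : extP β (a-1) < conjP α (a-1) := by
    have h1 := hpoint (a-1); have h2 := hpointl (a-1)
    rw [show a - 1 + 1 = a by omega] at h1 h2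
    have h3 := haeq (a-1) (by omega)
    omega
  have he_ex : ∃ J, a ≤ J ∧ Pm J = Pl J := ⟨q, le_of_lt ha_lt_q, htot q le_rfl⟩
  set e := Nat.find he_ex with hedef
  obtain ⟨hea, heeq⟩ : a ≤ e ∧ Pm e = Pl e := Nat.find_spec he_ex
  have hstrict : ∀ J, a ≤ J → J < e → Pm J < Pl J := fun J h1 h2 =>
    lt_of_le_of_ne (hdom J) (fun hcon => Nat.find_min he_ex h2 ⟨h1, hcon⟩)
  have ha_lt_e : a < e := lt_of_le_of_ne hea (fun hcon => by rw [← hcon] at heeq; omega)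
  set k := e - 1 with hkdef
  have hk_ge_a : a ≤ k := by omega
  have hmuk : conjP α k < extP β k := by
    have h1 := hpoint k; have h2 := hpointl k
    rw [show k + 1 = e by omega] at h1 h2
    have h3 := hstrict k hk_ge_a (by omega)
    omega
  have hk_lt_q : k < q := by
    by_contra h
    rw [show extP β k = 0 from dif_neg h] at hmuk; omega
  have hj_lt_q : a - 1 < q := by
    have : 0 < conjP α (a-1) := by omega
    rw [conjP, Finset.card_pos] at this
    obtain ⟨i, hi⟩ := this
    simp only [Finset.mem_filter] at hi
    have := hq i; omega
  set j := a - 1 with hjdef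
  have hjk : j < k := by omega
  set jF : Fin q := ⟨j, hj_lt_q⟩ with hjF
  set kF : Fin q := ⟨k, hk_lt_q⟩ with hkF
  have hjkF : jF ≠ kF := by
    intro hcon; rw [Fin.ext_iff] at hcon; simp [hjF, hkF] at hcon; omega
  have hβk1 : 1 ≤ β kF := by
    have : extP β k = β kF := by rw [extP]; rw [dif_pos hk_lt_q]
    omega
  have hβjval : extP β j = β jF := by rw [extP]; rw [dif_pos hj_lt_q]
  -- previous-value facts
  have hpw : ∀ J, J + 1 < a → extP β J = conjP α J := by
    intro J hJ
    have h1 := hpoint J; have h2 := hpointl J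
    have h3 := haeq J (by omega); have h4 := haeq (J+1) hJ
    omega
  have hμe : e < q → extP β e + 1 ≤ extP β k := by
    intro he_q
    have h1 := hpoint e; have h2 := hpointl e
    have h3 := hdom (e+1)
    have h4 : conjP α e ≤ conjP α k := conjP_antitone α (by omega)
    change Pm (e+1) ≤ Pl (e+1) at h3
    omega
  set β' : Fin q → ℕ := fun x => if x.val = j then β x + 1 else if x.val = k then β x - 1 else β x
    with hβ'
  have hβ'j : β' jF = β jF + 1 := by
    have h : β' jF = if j = j then β jF + 1 else if j = k then β jF - 1 else β jF := rfl
    rw [h, if_pos rfl]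
  have hβ'k : β' kF = β kF - 1 := by
    have h : β' kF = if k = j then β kF + 1 else if k = k then β kF - 1 else β kF := rfl
    rw [h, if_neg (by omega), if_pos rfl]
  have hβ'x : ∀ x : Fin q, x.val ≠ j → x.val ≠ k → β' x = β x := by
    intro x h1 h2; simp [hβ', h1, h2]
  -- pointwise relation of extP
  have hext' : ∀ J, extP β' J + (if J = k then 1 else 0) = extP β J + (if J = j then 1 else 0) := by
    intro J
    by_cases hJq : J < q
    · have hev : extP β' J = β' ⟨J, hJq⟩ := dif_pos hJq
      have hev2 : extP β J = β ⟨J, hJq⟩ := dif_pos hJq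
      have hk1 : J = k → 1 ≤ β ⟨J, hJq⟩ := fun h => by
        rw [show (⟨J, hJq⟩ : Fin q) = kF from Fin.ext h]; exact hβk1
      have hb : β' ⟨J, hJq⟩ = if J = j then β ⟨J, hJq⟩ + 1
          else if J = k then β ⟨J, hJq⟩ - 1 else β ⟨J, hJq⟩ := rfl
      rw [hev, hev2, hb]
      rcases eq_or_ne J k with hJk | hJk
      · have h1le : 1 ≤ β ⟨J, hJq⟩ := hk1 hJk
        split_ifs <;> omega
      · split_ifs <;> omega
    · have h1 : extP β' J = 0 := dif_neg hJq
      have h2 : extP β J = 0 := dif_neg hJq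
      rw [h1, h2, if_neg (by omega), if_neg (by omega)]
  have hP' : ∀ J, (∑ x ∈ range J, extP β' x) + (if k < J then 1 else 0)
      = Pm J + (if j < J then 1 else 0) := by
    intro J
    have hs : ∀ c : ℕ, (∑ x ∈ range J, if x = c then (1:ℕ) else 0) = if c < J then 1 else 0 := by
      intro c
      rw [Finset.sum_ite_eq' (range J) c (fun _ => (1:ℕ))]
      simp [Finset.mem_range]
    calc (∑ x ∈ range J, extP β' x) + (if k < J then 1 else 0)
        = ∑ x ∈ range J, (extP β' x + if x = k then 1 else 0) := by
          rw [Finset.sum_add_distrib, hs k]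
      _ = ∑ x ∈ range J, (extP β x + if x = j then 1 else 0) := by
          exact Finset.sum_congr rfl fun x _ => hext' x
      _ = Pm J + (if j < J then 1 else 0) := by
          rw [Finset.sum_add_distrib, hs j]
  -- antitone of β'
  have hval : ∀ z : Fin q, β' z
      = if z.val = j then β z + 1 else if z.val = k then β z - 1 else β z := fun z => rfl
  have hprev : 0 < j → β jF + 1 ≤ β ⟨j-1, by omega⟩ := by
    intro hj0
    have h1 : extP β (j-1) = conjP α (j-1) := hpw (j-1) (by omega)
    have h2 : conjP α j ≤ conjP α (j-1) := conjP_antitone α (by omega)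
    have h3 : extP β (j-1) = β ⟨j-1, by omega⟩ := dif_pos (by omega)
    omega
  have hanti' : Antitone β' := by
    intro x y hxy
    have hxy' : x.val ≤ y.val := hxy
    rw [hval x, hval y]
    rcases eq_or_ne y.val j with hyj | hyj
    · rcases eq_or_ne x.val j with hxj | hxj
      · have hxyeq : x = y := Fin.ext (by omega)
        rw [if_pos hyj, if_pos hxj, hxyeq]
      · have hxlt : x.val < j := by omega
        rw [if_pos hyj, if_neg hxj, if_neg (by omega : ¬ x.val = k)]
        have h1 : β jF + 1 ≤ β ⟨j-1, by omega⟩ := hprev (by omega)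
        have h2 : β ⟨j-1, by omega⟩ ≤ β x := hβ (by simp [Fin.le_def]; omega)
        have h3 : β y = β jF := by rw [show y = jF from Fin.ext hyj]
        omega
    · rcases eq_or_ne y.val k with hyk | hyk
      · rw [if_neg hyj, if_pos hyk]
        rcases eq_or_ne x.val j with hxj | hxj
        · rw [if_pos hxj]
          have := hβ hxy; omega
        · rcases eq_or_ne x.val k with hxk | hxk
          · have hxyeq : x = y := Fin.ext (by omega)
            rw [if_neg hxj, if_pos hxk, hxyeq]
          · rw [if_neg hxj, if_neg hxk]
            have := hβ hxy; omega
      · rw [if_neg hyj, if_neg hyk]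
        rcases eq_or_ne x.val j with hxj | hxj
        · rw [if_pos hxj]
          have := hβ hxy; omega
        · rcases eq_or_ne x.val k with hxk | hxk
          · rw [if_neg hxj, if_pos hxk]
            have hylt : k < y.val := by omega
            have heq : e ≤ y.val := by omega
            have heq2 : e < q := lt_of_le_of_lt heq y.isLt
            have h1 : extP β e + 1 ≤ extP β k := hμe heq2
            have h2 : extP β e = β ⟨e, heq2⟩ := dif_pos heq2
            have h3 : extP β k = β ⟨k, hk_lt_q⟩ := dif_pos hk_lt_q
            have h4 : β y ≤ β ⟨e, heq2⟩ := hβ (by simp [Fin.le_def]; omega)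
            have h5 : β ⟨k, hk_lt_q⟩ = β x := by
              rw [show x = ⟨k, hk_lt_q⟩ from Fin.ext hxk]
            omega
          · rw [if_neg hxj, if_neg hxk]
            exact hβ hxy
  -- sum preserved
  have hsum' : ∑ x, β' x = ∑ x, β x := by
    have hpt : ∀ x : Fin q, β' x + (if x = kF then 1 else 0)
        = β x + (if x = jF then 1 else 0) := by
      intro x
      rcases eq_or_ne x jF with h | h
      · subst h
        rw [if_neg hjkF, if_pos rfl, hβ'j]
      · rcases eq_or_ne x kF with h2 | h2
        · subst h2
          rw [if_pos rfl, if_neg h, hβ'k]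
          omega
        · have hx : β' x = β x := hβ'x x
            (fun hc => h (Fin.ext hc)) (fun hc => h2 (Fin.ext hc))
          rw [if_neg h2, if_neg h, hx]
    have hsc : ∑ x, (β' x + if x = kF then (1:ℕ) else 0)
        = ∑ x, (β x + if x = jF then (1:ℕ) else 0) :=
      Finset.sum_congr rfl (fun x _ => hpt x)
    rw [Finset.sum_add_distrib, Finset.sum_add_distrib] at hsc
    have h1 : (∑ x : Fin q, if x = kF then (1:ℕ) else 0) = 1 := by
      rw [Finset.sum_ite_eq' univ kF (fun _ => (1:ℕ))]; simp
    have h2 : (∑ x : Fin q, if x = jF then (1:ℕ) else 0) = 1 := by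
      rw [Finset.sum_ite_eq' univ jF (fun _ => (1:ℕ))]; simp
    rw [h1, h2] at hsc
    omega
  -- dominance preserved
  have hdom' : DomP (extP β') (conjP α) := by
    intro J
    have h := hP' J
    show (∑ x ∈ range J, extP β' x) ≤ Pl J
    have hd : Pm J ≤ Pl J := hdom J
    by_cases h1 : j < J
    · by_cases h2 : k < J
      · rw [if_pos h2, if_pos h1] at h; omega
      · rw [if_neg h2, if_pos h1] at h
        have h3 : Pm J < Pl J := hstrict J (by omega) (by omega)
        omega
    · rw [if_neg (by omega : ¬ k < J), if_neg h1] at h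
      omega
  -- measure decreases
  have hmeas : measureP q α β' < measureP q α β := by
    rw [measureP, measureP]
    apply Finset.sum_lt_sum
    · intro J _
      have h := hP' J
      have hmono : Pm J ≤ ∑ x ∈ range J, extP β' x := by
        by_cases h1 : j < J
        · by_cases h2 : k < J
          · rw [if_pos h2, if_pos h1] at h; omega
          · rw [if_neg h2, if_pos h1] at h; omega
        · rw [if_neg (by omega : ¬ k < J), if_neg h1] at h; omega
      have hmono' : (∑ x ∈ range J, extP β x) ≤ ∑ x ∈ range J, extP β' x := hmono
      omega
    · refine ⟨a, Finset.mem_range.mpr (by omega), ?_⟩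
      have h := hP' a
      rw [if_neg (by omega : ¬ k < a), if_pos (by omega : j < a)] at h
      have hA' : (∑ x ∈ range a, extP β x) < ∑ x ∈ range a, conjP α x := hA
      have h' : (∑ x ∈ range a, extP β' x) = (∑ x ∈ range a, extP β x) + 1 := h
      omega
  exact ⟨jF, kF, β', hjk, hβk1, hβ'j, hβ'k,
    fun x h1 h2 => hβ'x x (fun hc => h1 (Fin.ext hc)) (fun hc => h2 (Fin.ext hc)),
    hanti', hsum', hdom', hmeas⟩

end move


lemma totals {p q : ℕ} {α : Fin p → ℕ} {β : Fin q → ℕ} (hq : ∀ i, α i ≤ q)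
    (hsum : ∑ i, α i = ∑ j, β j) :
    ∀ J, q ≤ J → ∑ j ∈ range J, extP β j = ∑ j ∈ range J, conjP α j := by
  intro J hJ
  rw [extP_sum, conjP_sum]
  have h1 : univ.filter (fun j : Fin q => j.val < J) = univ := by
    ext j; simp only [Finset.mem_filter, Finset.mem_univ, true_and, iff_true]
    exact lt_of_lt_of_le j.isLt hJ
  rw [h1]
  have h2 : ∀ i, min (α i) J = α i := fun i => min_eq_left (le_trans (hq i) hJ)
  simp_rw [h2]
  exact hsum.symm

lemma transfer {p q : ℕ} {α : Fin p → ℕ} {β β' : Fin q → ℕ} {jF kF : Fin q}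
    (hβ : Antitone β) (hjk : jF.val < kF.val) (hk1 : 1 ≤ β kF)
    (hj' : β' jF = β jF + 1) (hk' : β' kF = β kF - 1)
    (hx' : ∀ x, x ≠ jF → x ≠ kF → β' x = β x)
    (h : (RTSet p q α β').Nonempty) : (RTSet p q α β).Nonempty := by
  obtain ⟨T, hT1, hT2⟩ := h
  have hne : jF ≠ kF := fun hc => by rw [hc] at hjk; omega
  have hble : β kF ≤ β jF := hβ (le_of_lt (show jF < kF from hjk))
  have hcard : (univ.filter fun i => kF ∈ T i).card < (univ.filter fun i => jF ∈ T i).card := by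
    rw [hT2, hT2, hj', hk']
    omega
  obtain ⟨i₀, hi₀1, hi₀2⟩ : ∃ i₀, jF ∈ T i₀ ∧ kF ∉ T i₀ := by
    by_contra hcon
    push_neg at hcon
    have hsub : (univ.filter fun i => jF ∈ T i) ⊆ (univ.filter fun i => kF ∈ T i) := by
      intro i hi
      simp only [Finset.mem_filter, Finset.mem_univ, true_and] at hi ⊢
      exact hcon i hi
    exact absurd (Finset.card_le_card hsub) (by omega)
  have hmemS : ∀ y : Fin q, y ∈ insert kF ((T i₀).erase jF) ↔ (y = kF ∨ (y ≠ jF ∧ y ∈ T i₀)) := by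
    intro y; simp [Finset.mem_insert, Finset.mem_erase]
  refine ⟨Function.update T i₀ (insert kF ((T i₀).erase jF)), ?_, ?_⟩
  · intro i
    by_cases h : i = i₀
    · rw [h, Function.update_self]
      have h1 : kF ∉ (T i₀).erase jF := fun hc => hi₀2 (Finset.mem_of_mem_erase hc)
      rw [Finset.card_insert_of_notMem h1, Finset.card_erase_of_mem hi₀1]
      have h2 : 1 ≤ (T i₀).card := Finset.card_pos.mpr ⟨jF, hi₀1⟩
      rw [hT1] at h2 ⊢
      omega
    · rw [Function.update_of_ne h]; exact hT1 i
  · intro x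
    by_cases hxj : x = jF
    · rw [hxj]
      have hfe : (univ.filter fun i => jF ∈ Function.update T i₀ (insert kF ((T i₀).erase jF)) i)
          = (univ.filter fun i => jF ∈ T i).erase i₀ := by
        ext i
        simp only [Finset.mem_filter, Finset.mem_erase, Finset.mem_univ, true_and]
        by_cases h : i = i₀
        · rw [h, Function.update_self, hmemS]
          simp [hne]
        · rw [Function.update_of_ne h]
          simp [h]
      rw [hfe, Finset.card_erase_of_mem (by simp [hi₀1]), hT2, hj']
      omega
    · by_cases hxk : x = kF
      · rw [hxk]
        have hfe : (univ.filter fun i => kF ∈ Function.update T i₀ (insert kF ((T i₀).erase jF)) i)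
            = insert i₀ (univ.filter fun i => kF ∈ T i) := by
          ext i
          simp only [Finset.mem_filter, Finset.mem_insert, Finset.mem_univ, true_and]
          by_cases h : i = i₀
          · rw [h, Function.update_self, hmemS]
            simp
          · rw [Function.update_of_ne h]
            simp [h]
        rw [hfe, Finset.card_insert_of_notMem (by simp [hi₀2]), hT2, hk']
        omega
      · have hfe : (univ.filter fun i => x ∈ Function.update T i₀ (insert kF ((T i₀).erase jF)) i)
            = univ.filter fun i => x ∈ T i := by
          ext i
          simp only [Finset.mem_filter, Finset.mem_univ, true_and]
          by_cases h : i = i₀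
          · rw [h, Function.update_self, hmemS]
            constructor
            · rintro (h2 | ⟨-, h2⟩)
              · exact absurd h2 hxk
              · exact h2
            · intro h2; exact Or.inr ⟨hxj, h2⟩
          · rw [Function.update_of_ne h]
        rw [hfe, hT2, hx' x hxj hxk]

lemma exists_mem {p q : ℕ} {α : Fin p → ℕ} (hq : ∀ i, α i ≤ q) :
    ∀ n (β : Fin q → ℕ), measureP q α β ≤ n → Antitone β → (∑ i, α i = ∑ j, β j) →
    DomP (extP β) (conjP α) → (RTSet p q α β).Nonempty := by
  intro n
  induction n with
  | zero =>
    intro β hm hb hs hd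
    by_cases hne : extP β = conjP α
    · have hβeq : β = fun j : Fin q => conjP α j.val := by
        funext x
        rw [← hne, extP, dif_pos x.isLt, Fin.eta]
      rw [hβeq]
      exact ⟨_, canonT_mem hq⟩
    · obtain ⟨jF, kF, β', hjk, hk1, hj', hk', hx', ha', hs', hd', hmeas⟩ :=
        move_lemma hb hq (totals hq hs) hd hne
      omega
  | succ n ih =>
    intro β hm hb hs hd
    by_cases hne : extP β = conjP α
    · have hβeq : β = fun j : Fin q => conjP α j.val := by
        funext x
        rw [← hne, extP, dif_pos x.isLt, Fin.eta]
      rw [hβeq]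
      exact ⟨_, canonT_mem hq⟩
    · obtain ⟨jF, kF, β', hjk, hk1, hj', hk', hx', ha', hs', hd', hmeas⟩ :=
        move_lemma hb hq (totals hq hs) hd hne
      exact transfer hb hjk hk1 hj' hk' hx'
        (ih β' (by omega) ha' (hs.trans hs'.symm) hd')

lemma second_element {p q : ℕ} {α : Fin p → ℕ} {β : Fin q → ℕ}
    (hβ : Antitone β) (hq : ∀ i, α i ≤ q) {T : Fin p → Finset (Fin q)}
    (hT : T ∈ RTSet p q α β) (hne : extP β ≠ conjP α) :
    ∃ T' ∈ RTSet p q α β, T' ≠ T := by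
  obtain ⟨hT1, hT2⟩ := hT
  by_cases hrect : ∃ (i i' : Fin p) (x y : Fin q), x ∈ T i ∧ x ∉ T i' ∧ y ∉ T i ∧ y ∈ T i'
  · obtain ⟨i, i', x, y, h1, h2, h3, h4⟩ := hrect
    have hii' : i ≠ i' := fun hc => h2 (hc ▸ h1)
    have hxy : x ≠ y := fun hc => h3 (hc ▸ h1)
    set T' := Function.update (Function.update T i (insert y ((T i).erase x))) i'
      (insert x ((T i').erase y)) with hT'
    have hTi : T' i = insert y ((T i).erase x) := by
      rw [hT', Function.update_of_ne hii', Function.update_self]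
    have hTi' : T' i' = insert x ((T i').erase y) := by
      rw [hT', Function.update_self]
    have hTo : ∀ z, z ≠ i → z ≠ i' → T' z = T z := fun z hz1 hz2 => by
      rw [hT', Function.update_of_ne hz2, Function.update_of_ne hz1]
    have hmi : ∀ w : Fin q, w ∈ T' i ↔ (w = y ∨ (w ≠ x ∧ w ∈ T i)) := by
      intro w; rw [hTi]; simp [Finset.mem_insert, Finset.mem_erase]
    have hmi' : ∀ w : Fin q, w ∈ T' i' ↔ (w = x ∨ (w ≠ y ∧ w ∈ T i')) := by
      intro w; rw [hTi']; simp [Finset.mem_insert, Finset.mem_erase]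
    refine ⟨T', ⟨?_, ?_⟩, ?_⟩
    · intro z
      by_cases hz1 : z = i
      · rw [hz1, hTi]
        have ha : y ∉ (T i).erase x := fun hc => h3 (Finset.mem_of_mem_erase hc)
        rw [Finset.card_insert_of_notMem ha, Finset.card_erase_of_mem h1]
        have h2c : 1 ≤ (T i).card := Finset.card_pos.mpr ⟨x, h1⟩
        rw [hT1] at h2c ⊢
        omega
      · by_cases hz2 : z = i'
        · rw [hz2, hTi']
          have ha : x ∉ (T i').erase y := fun hc => h2 (Finset.mem_of_mem_erase hc)
          rw [Finset.card_insert_of_notMem ha, Finset.card_erase_of_mem h4]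
          have h2c : 1 ≤ (T i').card := Finset.card_pos.mpr ⟨y, h4⟩
          rw [hT1] at h2c ⊢
          omega
        · rw [hTo z hz1 hz2]; exact hT1 z
    · intro w
      by_cases hwx : w = x
      · rw [hwx]
        have hfe : (univ.filter fun z => x ∈ T' z) = insert i' ((univ.filter fun z => x ∈ T z).erase i) := by
          ext z
          simp only [Finset.mem_filter, Finset.mem_insert, Finset.mem_erase, Finset.mem_univ,
            true_and]
          by_cases hz1 : z = i
          · rw [hz1, hmi]
            simp [hxy, hii', h1]
          · by_cases hz2 : z = i'
            · rw [hz2, hmi']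
              simp
            · rw [hTo z hz1 hz2]
              simp [hz1, hz2]
        rw [hfe, Finset.card_insert_of_notMem (by simp [h2]),
          Finset.card_erase_of_mem (by simp [h1]), hT2]
        have : 1 ≤ β x := by rw [← hT2 x]; exact Finset.card_pos.mpr ⟨i, by simp [h1]⟩
        omega
      · by_cases hwy : w = y
        · rw [hwy]
          have hfe : (univ.filter fun z => y ∈ T' z)
              = insert i ((univ.filter fun z => y ∈ T z).erase i') := by
            ext z
            simp only [Finset.mem_filter, Finset.mem_insert, Finset.mem_erase, Finset.mem_univ,
              true_and]
            by_cases hz1 : z = i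
            · rw [hz1, hmi]
              simp
            · by_cases hz2 : z = i'
              · rw [hz2, hmi']
                simp [hxy.symm, (Ne.symm hii'), h4]
              · rw [hTo z hz1 hz2]
                simp [hz1, hz2]
          rw [hfe, Finset.card_insert_of_notMem (by simp [h3]),
            Finset.card_erase_of_mem (by simp [h4]), hT2]
          have : 1 ≤ β y := by rw [← hT2 y]; exact Finset.card_pos.mpr ⟨i', by simp [h4]⟩
          omega
        · have hfe : (univ.filter fun z => w ∈ T' z) = univ.filter fun z => w ∈ T z := by
            ext z
            simp only [Finset.mem_filter, Finset.mem_univ, true_and]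
            by_cases hz1 : z = i
            · rw [hz1, hmi]
              constructor
              · rintro (h5 | ⟨-, h5⟩)
                · exact absurd h5 hwy
                · exact h5
              · intro h5; exact Or.inr ⟨hwx, h5⟩
            · by_cases hz2 : z = i'
              · rw [hz2, hmi']
                constructor
                · rintro (h5 | ⟨-, h5⟩)
                  · exact absurd h5 hwx
                  · exact h5
                · intro h5; exact Or.inr ⟨hwy, h5⟩
              · rw [hTo z hz1 hz2]
          rw [hfe]; exact hT2 w
    · intro hc
      have : y ∈ T i := by
        rw [← hc] at h3
        exact absurd ((hmi y).mpr (Or.inl rfl)) (by rw [hc] at h3 ⊢; exact h3)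
      exact h3 this
  · exfalso
    push_neg at hrect
    have hcomp : ∀ x y : Fin q,
        (univ.filter fun i => x ∈ T i) ⊆ (univ.filter fun i => y ∈ T i) ∨
        (univ.filter fun i => y ∈ T i) ⊆ (univ.filter fun i => x ∈ T i) := by
      intro x y
      by_contra hcon
      push_neg at hcon
      obtain ⟨hns1, hns2⟩ := hcon
      obtain ⟨i, hi1, hi2⟩ := Finset.not_subset.mp hns1
      obtain ⟨i', hi'1, hi'2⟩ := Finset.not_subset.mp hns2
      simp only [Finset.mem_filter, Finset.mem_univ, true_and] at hi1 hi2 hi'1 hi'2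
      exact hrect i i' x y hi1 hi'2 hi2 hi'1
    have hCsub : ∀ x y : Fin q, x ≤ y → (univ.filter fun i => y ∈ T i) ⊆ (univ.filter fun i => x ∈ T i) := by
      intro x y hxy
      rcases hcomp x y with h | h
      · have hc1 : β x ≤ β y := by rw [← hT2 x, ← hT2 y]; exact Finset.card_le_card h
        have hc2 : β y ≤ β x := hβ hxy
        have heq := Finset.eq_of_subset_of_card_le h (by rw [hT2, hT2]; omega)
        rw [heq]
      · exact h
    have hdc : ∀ i, ∀ x y : Fin q, x ≤ y → y ∈ T i → x ∈ T i := by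
      intro i x y hxy hy
      have h5 : i ∈ univ.filter fun i' => y ∈ T i' := by simp [hy]
      have := hCsub x y hxy h5
      simpa using this
    have hmem : ∀ i, ∀ x : Fin q, x ∈ T i ↔ x.val < α i := by
      intro i x
      rw [← hT1 i]
      exact downward_closed_eq (T i) (hdc i) x
    have hβc : ∀ w : Fin q, β w = conjP α w.val := by
      intro w
      rw [← hT2 w, conjP]
      congr 1
      ext i
      simp [hmem i w]
    exact hne (extP_eq_conj_of_canon hq hβc)

/-- Proposition 5.8: (a) if `RT(α,β) ≠ ∅` then `β ⪯ ᵗα`; (b) if `β = ᵗα` then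
`#RT(α,β) = 1`; (c) if `β ≺ ᵗα` strictly then `#RT(α,β) ≥ 2`. -/
theorem rtSet_dominance (p q : ℕ) (α : Fin p → ℕ) (β : Fin q → ℕ)
    (hα : Antitone α) (hβ : Antitone β) (hsum : ∑ i, α i = ∑ j, β j) :
    ((RTSet p q α β).Nonempty → DomP (extP β) (conjP α)) ∧
    (extP β = conjP α → (RTSet p q α β).ncard = 1) ∧
    (DomP (extP β) (conjP α) → extP β ≠ conjP α → 2 ≤ (RTSet p q α β).ncard) := by
  refine ⟨fun ⟨T, hT⟩ => partA hT, ?_, ?_⟩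
  · intro heq
    have hq : ∀ i, α i ≤ q := alpha_le_q hsum (fun J => le_of_eq (by rw [heq]))
    have hset : RTSet p q α β = {canonT p q α} := by
      ext T
      constructor
      · intro hT
        exact Set.mem_singleton_iff.mpr (mem_canon_unique hT heq)
      · intro hT
        rw [Set.mem_singleton_iff] at hT
        have hβeq : β = fun j : Fin q => conjP α j.val := funext fun x => by
          rw [← heq, extP, dif_pos x.isLt, Fin.eta]
        rw [hT, hβeq]
        exact canonT_mem hq
    rw [hset, Set.ncard_singleton]
  · intro hdom hne
    have hq : ∀ i, α i ≤ q := alpha_le_q hsum hdom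
    obtain ⟨T, hT⟩ := exists_mem hq (measureP q α β) β le_rfl hβ hsum hdom
    obtain ⟨T', hT', hTT'⟩ := second_element hβ hq hT hne
    exact (Set.one_lt_ncard_iff (Set.toFinite _)).mpr ⟨T', T, hT', hT, hTT'⟩
end
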